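/- arXiv:2005.10993 — 6 statements merged into one kernel-verified Lean document; each statement's English description precedes it below -/
import Mathlib

section
/- Let R be a commutative ring, let p ≥ 1 and y_1,…,y_p ∈ R, and let i be an integer with 1 ≤ i ≤ p. Then i! · e_i(y_1,…,y_p) = Σ_{τ ∈ S_i} (−1)^{i−|C(τ)|} ∏_{c ∈ C(τ)} (y_1^{ℓ(c)} + ⋯ + y_p^{ℓ(c)}), where the sum ranges over all permutations τ of {1,…,i}, C(τ) is the collection of cycles in the decomposition of τ into disjoint cycles (with fixed points counted as cycles of length 1), |C(τ)| is the number of such cycles, and ℓ(c) is the length of the cycle c. -/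
open Finset Equiv Equiv.Perm

section Aux

variable {R : Type*} [CommRing R] {p i : ℕ}

private lemma inv_pow_apply (τ : Perm (Fin i)) {g : Fin i → Fin p} (hg : g ∘ τ = g) :
    ∀ (n : ℕ) (x : Fin i), g ((τ ^ n) x) = g x := by
  intro n
  induction n with
  | zero => simp
  | succ n ih =>
    intro x
    rw [pow_succ, Perm.mul_apply, ih (τ x)]
    exact congrFun hg x

private lemma inv_sameCycle (τ : Perm (Fin i)) {g : Fin i → Fin p} (hg : g ∘ τ = g)
    {x z : Fin i} (h : τ.SameCycle x z) : g x = g z := by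
  obtain ⟨n, -, rfl⟩ := h.exists_pow_eq'
  exact (inv_pow_apply τ hg n x).symm

private lemma sign_cast (τ : Perm (Fin i)) :
    (-1 : R) ^ (i - (Multiset.card τ.cycleType + (i - τ.cycleType.sum))) =
      ((Perm.sign τ : ℤ) : R) := by
  have hsum : τ.cycleType.sum ≤ i := by
    rw [Equiv.Perm.sum_cycleType]
    simpa using (Finset.card_le_univ τ.support)
  have hcard : Multiset.card τ.cycleType ≤ τ.cycleType.sum := by
    simpa using Multiset.card_nsmul_le_sum (s := τ.cycleType) (a := 1)
      fun n hn => le_trans (by norm_num) (Equiv.Perm.two_le_of_mem_cycleType hn)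
  have h1 : i - (Multiset.card τ.cycleType + (i - τ.cycleType.sum)) =
      τ.cycleType.sum - Multiset.card τ.cycleType := by omega
  have h2 : (τ.cycleType.sum - Multiset.card τ.cycleType) + 2 * Multiset.card τ.cycleType =
      τ.cycleType.sum + Multiset.card τ.cycleType := by omega
  have : ((Perm.sign τ : ℤ) : R) = (-1 : R) ^ (τ.cycleType.sum + Multiset.card τ.cycleType) := by
    rw [Equiv.Perm.sign_of_cycleType]
    push_cast
    ring
  rw [this, h1, ← h2, pow_add]
  rw [pow_mul, neg_one_sq, one_pow, mul_one]

private lemma sign_sum_eq (g : Fin i → Fin p) :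
    ∑ τ ∈ Finset.univ.filter (fun τ : Perm (Fin i) => g ∘ τ = g),
        ((Perm.sign τ : ℤ) : R) =
      if Function.Injective g then 1 else 0 := by
  split_ifs with hinj
  · have : Finset.univ.filter (fun τ : Perm (Fin i) => g ∘ τ = g) = {1} := by
      ext τ
      simp only [mem_filter, mem_univ, true_and, mem_singleton]
      constructor
      · intro h
        exact Equiv.ext fun x => hinj (congrFun h x)
      · rintro rfl; rfl
    simp [this]
  · rw [Function.not_injective_iff] at hinj
    obtain ⟨a, b, hgab, hab⟩ := hinj
    have hgs : g ∘ (Equiv.swap a b : Perm (Fin i)) = g := by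
      funext z
      simp only [Function.comp_apply]
      rcases eq_or_ne z a with rfl | hza
      · rw [Equiv.swap_apply_left, hgab]
      rcases eq_or_ne z b with rfl | hzb
      · rw [Equiv.swap_apply_right, hgab]
      · rw [Equiv.swap_apply_of_ne_of_ne hza hzb]
    refine Finset.sum_involution (fun τ _ => Equiv.swap a b * τ) ?_ ?_ ?_ ?_
    · intro τ hτ
      have : Perm.sign (Equiv.swap a b * τ) = - Perm.sign τ := by
        rw [Perm.sign_mul, Perm.sign_swap hab, neg_one_mul]
      rw [this]
      push_cast
      ring
    · intro τ _ _ h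
      have : Equiv.swap a b = 1 := by
        have := congrArg (· * τ⁻¹) h
        simpa [mul_assoc] using this
      have h2 := Equiv.ext_iff.mp this a
      rw [Equiv.swap_apply_left, Perm.one_apply] at h2
      exact hab h2.symm
    · intro τ hτ
      simp only [mem_filter, mem_univ, true_and] at hτ ⊢
      calc g ∘ ⇑(Equiv.swap a b * τ) = (g ∘ (Equiv.swap a b : Perm (Fin i))) ∘ τ := rfl
      _ = g := by rw [hgs, hτ]
    · intro τ _
      show Equiv.swap a b * (Equiv.swap a b * τ) = τ
      rw [← mul_assoc, Equiv.swap_mul_self, one_mul]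

private lemma fiber_card (J : Finset (Fin p)) (hJ : J.card = i) :
    ((Finset.univ.filter (fun g : Fin i → Fin p => Function.Injective g)).filter
      (fun g => Finset.image g Finset.univ = J)).card = i.factorial := by
  classical
  have hcardJ : Fintype.card {x // x ∈ J} = i := by simp [hJ]
  rw [← Fintype.card_coe]
  have hgm : ∀ (g : {g // g ∈ (Finset.univ.filter
      (fun g : Fin i → Fin p => Function.Injective g)).filter
      (fun g => Finset.image g Finset.univ = J)}), Function.Injective g.1 ∧ ∀ x : Fin i,
      g.1 x ∈ J := by
    intro g
    have hg := g.2
    simp only [Finset.mem_filter, Finset.mem_univ, true_and] at hg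
    refine ⟨hg.1, fun x => ?_⟩
    have hx := Finset.mem_image_of_mem g.1 (Finset.mem_univ x)
    rwa [hg.2] at hx
  have hbij : ∀ g, Function.Bijective (fun x : Fin i => (⟨g.1 x, (hgm g).2 x⟩ : {x // x ∈ J})) :=
    fun g => (Fintype.bijective_iff_injective_and_card _).mpr
      ⟨fun a b h => (hgm g).1 (congrArg Subtype.val h), by simp [hcardJ]⟩
  have e : {g // g ∈ (Finset.univ.filter
      (fun g : Fin i → Fin p => Function.Injective g)).filter
      (fun g => Finset.image g Finset.univ = J)} ≃ (Fin i ≃ {x // x ∈ J}) :=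
    { toFun := fun g => Equiv.ofBijective _ (hbij g)
      invFun := fun e => ⟨fun x => (e x : Fin p), by
        simp only [Finset.mem_filter, Finset.mem_univ, true_and]
        have hinj : Function.Injective (fun x : Fin i => ((e x : Fin p))) :=
          fun a b h => e.injective (Subtype.ext h)
        refine ⟨hinj, Finset.eq_of_subset_of_card_le ?_ ?_⟩
        · intro j hj
          simp only [Finset.mem_image] at hj
          obtain ⟨x, -, rfl⟩ := hj
          exact (e x).2
        · rw [hJ, Finset.card_image_of_injective _ hinj, Finset.card_univ, Fintype.card_fin]⟩
      left_inv := fun g => Subtype.ext rfl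
      right_inv := fun e => Equiv.ext fun x => Subtype.ext rfl }
  rw [Fintype.card_congr e, Fintype.card_equiv (Fintype.equivOfCardEq (by simp [hcardJ]))]
  simp [Fintype.card_fin]

private lemma sum_injective_eq (y : Fin p → R) :
    ∑ g ∈ Finset.univ.filter (fun g : Fin i → Fin p => Function.Injective g),
        ∏ x : Fin i, y (g x) =
      (i.factorial : R) *
        ∑ J ∈ Finset.powersetCard i (Finset.univ : Finset (Fin p)), ∏ j ∈ J, y j := by
  classical
  have hmaps : ∀ g ∈ Finset.univ.filter (fun g : Fin i → Fin p => Function.Injective g),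
      Finset.image g Finset.univ ∈ Finset.powersetCard i (Finset.univ : Finset (Fin p)) := by
    intro g hg
    rw [mem_filter] at hg
    rw [mem_powersetCard]
    exact ⟨subset_univ _, by rw [Finset.card_image_of_injective _ hg.2, card_univ,
      Fintype.card_fin]⟩
  rw [← Finset.sum_fiberwise_of_maps_to hmaps]
  rw [Finset.mul_sum]
  refine Finset.sum_congr rfl fun J hJ => ?_
  rw [mem_powersetCard] at hJ
  have hterm : ∀ g ∈ (Finset.univ.filter
        (fun g : Fin i → Fin p => Function.Injective g)).filter
        (fun g => Finset.image g Finset.univ = J),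
      ∏ x : Fin i, y (g x) = ∏ j ∈ J, y j := by
    intro g hg
    simp only [mem_filter, mem_univ, true_and] at hg
    rw [← hg.2, Finset.prod_image (fun a _ b _ h => hg.1 h)]
  rw [Finset.sum_congr rfl hterm, Finset.sum_const, nsmul_eq_mul, fiber_card J hJ.2]

variable (τ : Perm (Fin i))

/-- The coloring-to-function map. -/
private noncomputable def toFun' (h : (↥(τ.supportᶜ) ⊕ ↥τ.cycleFactorsFinset) → Fin p) :
    Fin i → Fin p := fun x =>
  if hx : x ∈ τ.support then
    h (Sum.inr ⟨τ.cycleOf x, Equiv.Perm.cycleOf_mem_cycleFactorsFinset_iff.mpr hx⟩)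
  else h (Sum.inl ⟨x, Finset.mem_compl.mpr hx⟩)

/-- Base point of a cycle factor. -/
private noncomputable def pt (c : ↥τ.cycleFactorsFinset) : Fin i :=
  (c : Perm (Fin i)).support.min'
    (Equiv.Perm.IsCycle.nonempty_support (Equiv.Perm.mem_cycleFactorsFinset_iff.mp c.2).1)

/-- The function-to-coloring map. -/
private noncomputable def toCol (g : Fin i → Fin p) :
    (↥(τ.supportᶜ) ⊕ ↥τ.cycleFactorsFinset) → Fin p :=
  Sum.elim (fun x => g x.1) (fun c => g (pt τ c))

private lemma pt_mem (c : ↥τ.cycleFactorsFinset) : pt τ c ∈ (c : Perm (Fin i)).support :=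
  Finset.min'_mem _ _

private lemma toFun'_invariant (h : (↥(τ.supportᶜ) ⊕ ↥τ.cycleFactorsFinset) → Fin p) :
    toFun' τ h ∘ τ = toFun' τ h := by
  funext x
  simp only [Function.comp_apply, toFun']
  by_cases hx : x ∈ τ.support
  · have h1 : τ x ∈ τ.support := Equiv.Perm.apply_mem_support.mpr hx
    rw [dif_pos h1, dif_pos hx]
    congr 1
    exact congrArg Sum.inr (Subtype.ext (Equiv.Perm.cycleOf_self_apply τ x))
  · rw [Equiv.Perm.notMem_support.mp hx]

private lemma filter_cycleOf_eq (c : Perm (Fin i)) (hc : c ∈ τ.cycleFactorsFinset) :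
    τ.support.filter (fun x => τ.cycleOf x = c) = c.support := by
  ext x
  simp only [mem_filter]
  constructor
  · rintro ⟨hx, rfl⟩
    rw [Equiv.Perm.mem_support_cycleOf_iff]
    exact ⟨Equiv.Perm.SameCycle.refl _ _, hx⟩
  · intro hx
    have hco := (Equiv.Perm.cycle_is_cycleOf hx hc).symm
    refine ⟨?_, hco⟩
    exact (Equiv.Perm.mem_cycleFactorsFinset_support_le hc) hx

private lemma toFun'_apply_mem {x : Fin i} (hx : x ∈ τ.support)
    (h : (↥(τ.supportᶜ) ⊕ ↥τ.cycleFactorsFinset) → Fin p) :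
    toFun' τ h x =
      h (Sum.inr ⟨τ.cycleOf x, Equiv.Perm.cycleOf_mem_cycleFactorsFinset_iff.mpr hx⟩) := by
  rw [toFun', dif_pos hx]

private lemma toFun'_apply_notMem {x : Fin i} (hx : x ∉ τ.support)
    (h : (↥(τ.supportᶜ) ⊕ ↥τ.cycleFactorsFinset) → Fin p) :
    toFun' τ h x = h (Sum.inl ⟨x, Finset.mem_compl.mpr hx⟩) := by
  rw [toFun', dif_neg hx]

private lemma toCol_toFun' (h : (↥(τ.supportᶜ) ⊕ ↥τ.cycleFactorsFinset) → Fin p) :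
    toCol τ (toFun' τ h) = h := by
  funext a
  rcases a with ⟨x, hx⟩ | ⟨c, hc⟩
  · show toFun' τ h x = _
    rw [toFun'_apply_notMem τ (Finset.mem_compl.mp hx)]
  · show toFun' τ h (pt τ ⟨c, hc⟩) = _
    have hm : pt τ ⟨c, hc⟩ ∈ c.support := pt_mem τ ⟨c, hc⟩
    have hms : pt τ ⟨c, hc⟩ ∈ τ.support :=
      (Equiv.Perm.mem_cycleFactorsFinset_support_le hc) hm
    rw [toFun'_apply_mem τ hms]
    congr 1
    exact congrArg Sum.inr (Subtype.ext (Equiv.Perm.cycle_is_cycleOf hm hc).symm)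

private lemma toFun'_toCol {g : Fin i → Fin p} (hg : g ∘ τ = g) :
    toFun' τ (toCol τ g) = g := by
  funext x
  by_cases hx : x ∈ τ.support
  · rw [toFun'_apply_mem τ hx]
    show g (pt τ _) = g x
    set c : ↥τ.cycleFactorsFinset :=
      ⟨τ.cycleOf x, Equiv.Perm.cycleOf_mem_cycleFactorsFinset_iff.mpr hx⟩ with hcdef
    have hm : pt τ c ∈ (τ.cycleOf x).support := pt_mem τ c
    have hsc : τ.SameCycle x (pt τ c) := (Equiv.Perm.mem_support_cycleOf_iff.mp hm).1
    exact (inv_sameCycle τ hg hsc).symm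
  · rw [toFun'_apply_notMem τ hx]
    rfl

private lemma prod_toFun' (y : Fin p → R)
    (h : (↥(τ.supportᶜ) ⊕ ↥τ.cycleFactorsFinset) → Fin p) :
    (∏ a, (Sum.elim (fun _ => fun j => y j)
        (fun c : ↥τ.cycleFactorsFinset => fun j => y j ^ (c : Perm (Fin i)).support.card) a)
        (h a)) =
      ∏ x : Fin i, y (toFun' τ h x) := by
  classical
  rw [Fintype.prod_sum_type]
  rw [← Finset.prod_compl_mul_prod τ.support (fun x => y (toFun' τ h x))]
  congr 1
  · rw [← Finset.prod_coe_sort τ.supportᶜ (fun x => y (toFun' τ h x))]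
    refine Finset.prod_congr rfl fun x _ => ?_
    rw [toFun'_apply_notMem τ (Finset.mem_compl.mp x.2)]
    simp
  · rw [← Finset.prod_fiberwise_of_maps_to
      (fun x hx => Equiv.Perm.cycleOf_mem_cycleFactorsFinset_iff.mpr hx)
      (fun x => y (toFun' τ h x)),
      ← Finset.prod_coe_sort τ.cycleFactorsFinset]
    refine Finset.prod_congr rfl fun c _ => ?_
    rw [filter_cycleOf_eq τ (c : Perm (Fin i)) c.2]
    have : ∀ x ∈ (c : Perm (Fin i)).support, y (toFun' τ h x) = y (h (Sum.inr c)) := by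
      intro x hx
      have hxs : x ∈ τ.support := (Equiv.Perm.mem_cycleFactorsFinset_support_le c.2) hx
      rw [toFun'_apply_mem τ hxs]
      congr 1
      exact congrArg (h ∘ Sum.inr) (Subtype.ext (Equiv.Perm.cycle_is_cycleOf hx c.2).symm)
    rw [Finset.prod_congr rfl this, Finset.prod_const]
    simp

private lemma perm_term_eq (y : Fin p → R) :
    (∑ j, y j) ^ (i - τ.cycleType.sum) * (τ.cycleType.map fun k => ∑ j, y j ^ k).prod
      = ∑ g ∈ Finset.univ.filter (fun g : Fin i → Fin p => g ∘ τ = g),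
          ∏ x : Fin i, y (g x) := by
  classical
  have hexp : i - τ.cycleType.sum = (τ.supportᶜ : Finset (Fin i)).card := by
    rw [Equiv.Perm.sum_cycleType, Finset.card_compl, Fintype.card_fin]
  have hprod : (τ.cycleType.map fun k => ∑ j, y j ^ k).prod
      = ∏ c ∈ τ.cycleFactorsFinset, ∑ j, y j ^ (Equiv.Perm.support c).card := by
    rw [Equiv.Perm.cycleType_def, Multiset.map_map]
    rfl
  rw [hexp, hprod, ← Finset.prod_const,
    ← Finset.prod_coe_sort τ.supportᶜ (fun _ => ∑ j, y j),
    ← Finset.prod_coe_sort τ.cycleFactorsFinset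
      (fun c => ∑ j, y j ^ (Equiv.Perm.support c).card)]
  have hsum : (∏ x : ↥τ.supportᶜ, ∑ j, y j) *
      ∏ c : ↥τ.cycleFactorsFinset, ∑ j, y j ^ (c : Perm (Fin i)).support.card =
      ∏ a : ↥τ.supportᶜ ⊕ ↥τ.cycleFactorsFinset, ∑ j, (Sum.elim (fun _ => fun j => y j)
        (fun c : ↥τ.cycleFactorsFinset => fun j => y j ^ (c : Perm (Fin i)).support.card) a) j := by
    rw [Fintype.prod_sum_type]
    simp
  rw [hsum, Finset.prod_univ_sum, Fintype.piFinset_univ]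
  refine Finset.sum_bij' (fun h _ => toFun' τ h) (fun g _ => toCol τ g) ?_ ?_ ?_ ?_ ?_
  · intro h _
    simp only [Finset.mem_filter, Finset.mem_univ, true_and]
    exact toFun'_invariant τ h
  · intro g _
    exact Finset.mem_univ _
  · intro h _
    exact toCol_toFun' τ h
  · intro g hg
    simp only [Finset.mem_filter, Finset.mem_univ, true_and] at hg
    exact toFun'_toCol τ hg
  · intro h _
    exact prod_toFun' τ y h

end Aux

/-- For a commutative ring `R`, `p ≥ 1`, `y : Fin p → R` and `1 ≤ i ≤ p`,
`i! · e_i(y) = ∑_{τ ∈ S_i} (−1)^{i−|C(τ)|} ∏_{c ∈ C(τ)} (y_1^{ℓ(c)} + ⋯ + y_p^{ℓ(c)})`.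
Here the cycles of `τ` consist of the nontrivial cycles (recorded by `τ.cycleType`)
together with the fixed points, viewed as cycles of length `1`; hence the number of
cycles is `τ.cycleType.card + (i - τ.cycleType.sum)` and each fixed point contributes
a factor `∑ j, y j`. -/
theorem stmt_0 {R : Type*} [CommRing R] (p : ℕ) (hp : 1 ≤ p) (y : Fin p → R)
    (i : ℕ) (hi1 : 1 ≤ i) (hip : i ≤ p) :
    (i.factorial : R) *
        ∑ J ∈ Finset.powersetCard i (Finset.univ : Finset (Fin p)), ∏ j ∈ J, y j =
      ∑ τ : Equiv.Perm (Fin i),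
        (-1 : R) ^ (i - (Multiset.card τ.cycleType + (i - τ.cycleType.sum))) *
          ((∑ j, y j) ^ (i - τ.cycleType.sum) *
            (τ.cycleType.map fun k => ∑ j, y j ^ k).prod) := by
  classical
  rw [← sum_injective_eq y]
  have hstep : ∀ τ : Equiv.Perm (Fin i),
      (-1 : R) ^ (i - (Multiset.card τ.cycleType + (i - τ.cycleType.sum))) *
        ((∑ j, y j) ^ (i - τ.cycleType.sum) *
          (τ.cycleType.map fun k => ∑ j, y j ^ k).prod) =
      ∑ g ∈ Finset.univ.filter (fun g : Fin i → Fin p => g ∘ τ = g),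
        ((Equiv.Perm.sign τ : ℤ) : R) * ∏ x : Fin i, y (g x) := by
    intro τ
    rw [sign_cast, perm_term_eq τ y, Finset.mul_sum]
  rw [Finset.sum_congr rfl fun τ _ => hstep τ]
  rw [Finset.sum_comm' (t' := (Finset.univ : Finset (Fin i → Fin p)))
    (s' := fun g => Finset.univ.filter (fun τ : Equiv.Perm (Fin i) => g ∘ τ = g))
    (fun τ g => by simp)]
  have hinner : ∀ g : Fin i → Fin p,
      ∑ τ ∈ Finset.univ.filter (fun τ : Equiv.Perm (Fin i) => g ∘ τ = g),
        ((Equiv.Perm.sign τ : ℤ) : R) * ∏ x : Fin i, y (g x) =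
      (if Function.Injective g then 1 else 0) * ∏ x : Fin i, y (g x) := by
    intro g
    rw [← Finset.sum_mul, sign_sum_eq]
  rw [Finset.sum_congr rfl fun g _ => hinner g]
  simp only [ite_mul, one_mul, zero_mul, Finset.sum_filter]
end

section
/- Let R be a commutative ring, let p ≥ 1 and y_1,…,y_p ∈ R, and let i be an integer with 1 ≤ i ≤ p. Then i! · e_i(y_1,…,y_p) = Σ_{λ ⊢ i} (−1)^{i−ℓ(λ)} · (i! / ∏_{k≥1} k^{r_k} r_k!) · ∏_{k≥1} (y_1^k + ⋯ + y_p^k)^{r_k}, where the sum ranges over all integer partitions λ = (1^{r_1} 2^{r_2} ⋯) of i (so i = r_1 + 2r_2 + ⋯), ℓ(λ) = r_1 + r_2 + ⋯ is the number of parts of λ, and i!/∏_k k^{r_k} r_k! is an integer (the number of permutations of {1,…,i} with cycle type λ). -/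
/-!
Newton's identities `n e_n = ∑_{k=1}^n (-1)^(k+1) e_{n-k} p_k` together with `e_0 = 1` determine
the `e_n`, and the right-hand side satisfies the same recursion. Multiply by `(n-1)!` and expand
`(n-k)! e_{n-k}` by induction: a pair `(k, μ ⊢ n - k)` is the same as a partition `λ ⊢ n` with a
marked part `k`, and the coefficients match because
`n!/z_λ = ∑_{k ∈ λ} (n-1)!/(n-k)! · (n-k)!/z_{λ∖k}`
(the cycle through a fixed point of a permutation of cycle type `λ` has some length `k`, and
its other entries can be chosen in `(n-1)!/(n-k)!` ways).
-/

open Finset Nat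

/-- `z_λ = ∏_k k^(r_k) r_k!`, the order of the centralizer of a permutation of cycle type `λ`. -/
def centralizerCard (s : Multiset ℕ) : ℕ := s.prod * ∏ k ∈ s.toFinset, (s.count k)!

theorem centralizerCard_pos {s : Multiset ℕ} (hs : ∀ k ∈ s, 0 < k) : 0 < centralizerCard s :=
  Nat.mul_pos (CanonicallyOrderedAdd.multiset_prod_pos.2 hs) (by positivity)

theorem centralizerCard_dvd_factorial_sum {s : Multiset ℕ} (hs : ∀ k ∈ s, 0 < k) :
    centralizerCard s ∣ s.sum ! := by
  have h0 : s.toFinset.erase 0 = s.toFinset :=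
    Finset.erase_eq_of_notMem fun h => (hs 0 (Multiset.mem_toFinset.1 h)).ne rfl
  rw [← s.bell_mul_eq, h0, centralizerCard]
  refine mul_dvd_mul_right (Dvd.dvd.mul_left ?_ _) _
  simpa using Multiset.prod_dvd_prod_of_dvd id _ fun k hk => Nat.dvd_factorial (hs k hk) le_rfl

theorem centralizerCard_cons (k : ℕ) (t : Multiset ℕ) :
    centralizerCard (k ::ₘ t) = k * (t.count k + 1) * centralizerCard t := by
  classical
  have ht : ∏ j ∈ t.toFinset, (t.count j)! = ∏ j ∈ insert k t.toFinset, (t.count j)! :=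
    Finset.prod_subset (Finset.subset_insert _ _) fun j _ hj => by
      rw [Multiset.count_eq_zero.2 (by simpa using hj), factorial_zero]
  have hrest : ∏ j ∈ (insert k t.toFinset).erase k, ((k ::ₘ t).count j)! =
      ∏ j ∈ (insert k t.toFinset).erase k, (t.count j)! :=
    Finset.prod_congr rfl fun j hj => by rw [Multiset.count_cons_of_ne (Finset.ne_of_mem_erase hj)]
  rw [centralizerCard, centralizerCard, Multiset.prod_cons, Multiset.toFinset_cons, ht,
    ← Finset.mul_prod_erase _ _ (Finset.mem_insert_self _ _),
    ← Finset.mul_prod_erase _ _ (Finset.mem_insert_self _ _), hrest,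
    Multiset.count_cons_self, factorial_succ]
  ring

theorem centralizerCard_eq_mul_erase {s : Multiset ℕ} {k : ℕ} (hk : k ∈ s) :
    centralizerCard s = k * s.count k * centralizerCard (s.erase k) := by
  conv_lhs => rw [← Multiset.cons_erase hk]
  rw [centralizerCard_cons, Multiset.count_erase_self,
    Nat.sub_add_cancel (Multiset.count_pos.2 hk)]

theorem factorial_sub_mul_descFactorial_pred {n k : ℕ} (hk : 1 ≤ k) (hkn : k ≤ n) :
    (n - k)! * (n - 1).descFactorial (k - 1) = (n - 1)! := by
  simpa [show n - 1 - (k - 1) = n - k by omega] using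
    Nat.factorial_mul_descFactorial (n := n - 1) (k := k - 1) (by omega)

theorem factorial_div_centralizerCard_eq_sum {s : Multiset ℕ} (hs : ∀ k ∈ s, 0 < k)
    (hs0 : s ≠ 0) :
    s.sum ! / centralizerCard s = ∑ k ∈ s.toFinset,
      (s.sum - 1).descFactorial (k - 1) * ((s.sum - k)! / centralizerCard (s.erase k)) := by
  set n := s.sum with hn
  have hterm : ∀ k ∈ s.toFinset, (n - 1).descFactorial (k - 1) *
      ((n - k)! / centralizerCard (s.erase k)) * centralizerCard s =
        (n - 1)! * (s.count k * k) := by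
    intro k hk
    have hk : k ∈ s := Multiset.mem_toFinset.1 hk
    have hkn : k ≤ n := Multiset.le_sum_of_mem hk
    have herase : (s.erase k).sum = n - k := by
      rw [hn, ← Multiset.sum_erase hk, Nat.add_sub_cancel_left]
    have hpos : ∀ j ∈ s.erase k, 0 < j := fun j hj => hs j (Multiset.mem_of_mem_erase hj)
    obtain ⟨q, hq⟩ : centralizerCard (s.erase k) ∣ (n - k)! :=
      herase ▸ centralizerCard_dvd_factorial_sum hpos
    rw [centralizerCard_eq_mul_erase hk, ← factorial_sub_mul_descFactorial_pred (hs k hk) hkn, hq,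
      Nat.mul_div_cancel_left _ (centralizerCard_pos hpos)]
    ring
  have hn0 : n ≠ 0 := by
    obtain ⟨k, hk⟩ := Multiset.exists_mem_of_ne_zero hs0
    exact ((hs k hk).trans_le (Multiset.le_sum_of_mem hk)).ne'
  refine Nat.eq_of_mul_eq_mul_right (centralizerCard_pos hs) ?_
  rw [Nat.div_mul_cancel (centralizerCard_dvd_factorial_sum hs), Finset.sum_mul,
    Finset.sum_congr rfl hterm, ← Finset.mul_sum]
  simp_rw [← smul_eq_mul (a := s.count _), ← Finset.sum_multiset_count, ← hn]
  rw [mul_comm, Nat.mul_factorial_pred hn0]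

theorem Nat.Partition.sum_sum_parts_eq_sum_sum_cons {M : Type*} [AddCommMonoid M] (n : ℕ)
    (f : Multiset ℕ → ℕ → M) :
    ∑ lam : n.Partition, ∑ k ∈ lam.parts.toFinset, f lam.parts k =
      ∑ k ∈ Icc 1 n, ∑ mu : (n - k).Partition, f (k ::ₘ mu.parts) k := by
  classical
  rw [Finset.sum_comm' (t' := Icc 1 n) (s' := fun k => univ.filter (k ∈ ·.parts))
    (fun lam k => by
      simp only [mem_univ, Multiset.mem_toFinset, true_and, mem_filter, mem_Icc]
      exact ⟨fun h => ⟨h, lam.parts_pos h, lam.le_of_mem_parts h⟩, fun h => h.1⟩)]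
  refine Finset.sum_congr rfl fun k hk => ?_
  obtain ⟨hk1, hkn⟩ := Finset.mem_Icc.1 hk
  rw [← Finset.sum_subtype_eq_sum_filter, Finset.subtype_univ]
  exact Fintype.sum_equiv (partitionWithPartEquiv hk1 hkn) _ _ fun lam => by
    rw [partitionWithPartEquiv_apply_parts, Multiset.cons_erase lam.2]

theorem Nat.Partition.card_parts_le {n : ℕ} (lam : n.Partition) : Multiset.card lam.parts ≤ n := by
  simpa [lam.parts_sum] using
    Multiset.card_nsmul_le_sum (s := lam.parts) (a := 1) fun _ h => lam.parts_pos h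

section
variable {S : Type*} [CommRing S]

theorem neg_one_pow_succ_mul_neg_one_pow_sub {k l n : ℕ} (hk : 1 ≤ k) (hl : l + k ≤ n) :
    (-1 : S) ^ (k + 1) * (-1) ^ (n - k - l) = (-1) ^ (n - (l + 1)) := by
  rw [← pow_add, show k + 1 + (n - k - l) = n - (l + 1) + 2 by omega, pow_add, neg_one_sq, mul_one]

theorem factorial_mul_eq_sum_partitions (e p : ℕ → S) (he : e 0 = 1)
    (hnewton : ∀ n : ℕ, (n : S) * e n = ∑ k ∈ Icc 1 n, (-1) ^ (k + 1) * e (n - k) * p k) (n : ℕ) :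
    (n ! : S) * e n = ∑ lam : n.Partition, (-1) ^ (n - Multiset.card lam.parts) *
      ((n ! / centralizerCard lam.parts : ℕ) : S) * (lam.parts.map p).prod := by
  induction n using Nat.strong_induction_on with | _ n ih
  rcases Nat.eq_zero_or_pos n with rfl | hn
  · simp [he, centralizerCard]
  let G (s : Multiset ℕ) (k : ℕ) : S := (-1) ^ (n - Multiset.card s) *
    (((n - 1).descFactorial (k - 1) * ((n - k)! / centralizerCard (s.erase k)) : ℕ) : S) *
    (s.map p).prod
  calc (n ! : S) * e n = (n - 1)! * (n * e n) := by
        rw [← mul_assoc, ← Nat.cast_mul, mul_comm ((n - 1)!), Nat.mul_factorial_pred hn.ne']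
    _ = ∑ k ∈ Icc 1 n, (-1) ^ (k + 1) * ((n - 1).descFactorial (k - 1) : S) * p k *
          ((n - k)! * e (n - k)) := by
        rw [hnewton, Finset.mul_sum]
        refine Finset.sum_congr rfl fun k hk => ?_
        obtain ⟨hk1, hkn⟩ := Finset.mem_Icc.1 hk
        rw [← factorial_sub_mul_descFactorial_pred hk1 hkn]
        push_cast
        ring
    _ = ∑ k ∈ Icc 1 n, ∑ mu : (n - k).Partition, G (k ::ₘ mu.parts) k := by
        refine Finset.sum_congr rfl fun k hk => ?_
        obtain ⟨hk1, hkn⟩ := Finset.mem_Icc.1 hk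
        rw [ih (n - k) (by omega), Finset.mul_sum]
        refine Finset.sum_congr rfl fun mu _ => ?_
        simp only [G, Multiset.card_cons, Multiset.erase_cons_head, Multiset.map_cons,
          Multiset.prod_cons, Nat.cast_mul,
          ← neg_one_pow_succ_mul_neg_one_pow_sub (S := S) hk1
            (Nat.add_le_of_le_sub hkn mu.card_parts_le)]
        ring
    _ = ∑ lam : n.Partition, ∑ k ∈ lam.parts.toFinset, G lam.parts k :=
        (Nat.Partition.sum_sum_parts_eq_sum_sum_cons n G).symm
    _ = _ := by
        refine Finset.sum_congr rfl fun lam _ => ?_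
        have hlam0 : lam.parts ≠ 0 := fun h => hn.ne' (by simpa [h] using lam.parts_sum.symm)
        have hrec := factorial_div_centralizerCard_eq_sum (fun k hk => lam.parts_pos hk) hlam0
        rw [lam.parts_sum] at hrec
        rw [hrec, Nat.cast_sum, Finset.mul_sum, Finset.sum_mul]

end

namespace MvPolynomial
variable (σ R : Type*) [Fintype σ] [CommRing R]

theorem mul_esymm_eq_sum_Icc (n : ℕ) :
    (n : MvPolynomial σ R) * esymm σ R n =
      ∑ k ∈ Icc 1 n, (-1) ^ (k + 1) * esymm σ R (n - k) * psum σ R k := by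
  rw [mul_esymm_eq_sum, Finset.mul_sum]
  refine Finset.sum_nbij' (fun a => a.2) (fun k => (n - k, k)) ?_ ?_ ?_ (fun _ _ => rfl) ?_
  all_goals
    simp only [mem_filter, mem_Icc, HasAntidiagonal.mem_antidiagonal, Prod.forall,
      Prod.ext_iff, and_true]
  · omega
  · omega
  · omega
  · rintro a k ⟨rfl, -⟩
    have hsign : (-1 : MvPolynomial σ R) ^ (a + k + 1) * (-1) ^ a = (-1) ^ (k + 1) := by
      rw [← pow_add, show a + k + 1 + a = k + 1 + 2 * a by ring, pow_add, pow_mul, neg_one_sq,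
        one_pow, mul_one]
    rw [Nat.add_sub_cancel]
    linear_combination esymm σ R a * psum σ R k * hsign

theorem factorial_mul_esymm_eq_sum_partitions (n : ℕ) :
    (n ! : MvPolynomial σ R) * esymm σ R n = ∑ lam : n.Partition,
      (-1) ^ (n - Multiset.card lam.parts) *
        ((n ! / centralizerCard lam.parts : ℕ) : MvPolynomial σ R) *
          (lam.parts.map (psum σ R)).prod :=
  factorial_mul_eq_sum_partitions _ _ (esymm_zero σ R) (mul_esymm_eq_sum_Icc σ R) n

end MvPolynomial

theorem stmt_1_general {R : Type*} [CommRing R] (p : ℕ) (y : Fin p → R)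
    (i : ℕ) :
    (i.factorial : R) *
        ∑ J ∈ Finset.powersetCard i (Finset.univ : Finset (Fin p)), ∏ j ∈ J, y j =
      ∑ lam : Nat.Partition i,
        (-1 : R) ^ (i - Multiset.card lam.parts) *
          ((i.factorial /
              (lam.parts.prod *
                ∏ k ∈ lam.parts.toFinset, (lam.parts.count k).factorial) : ℕ) : R) *
          ∏ k ∈ lam.parts.toFinset, (∑ j, y j ^ k) ^ lam.parts.count k := by
  have h := congrArg (MvPolynomial.aeval y)
    (MvPolynomial.factorial_mul_esymm_eq_sum_partitions (Fin p) R i)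
  simp only [map_mul, map_sum, map_pow, map_neg, map_one, map_natCast, map_multiset_prod,
    Multiset.map_map, MvPolynomial.aeval_esymm_eq_multiset_esymm, Finset.esymm_map_val,
    Function.comp_def, MvPolynomial.psum, MvPolynomial.aeval_X] at h
  simpa only [Finset.prod_multiset_map_count, centralizerCard] using h

/-- For a commutative ring `R`, `p ≥ 1`, `y : Fin p → R` and `1 ≤ i ≤ p`,
`i! · e_i(y) = ∑_{λ ⊢ i} (−1)^{i−ℓ(λ)} · (i!/∏_k k^{r_k} r_k!) · ∏_k (∑_j y_j^k)^{r_k}`,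
where `λ = (1^{r_1} 2^{r_2} ⋯)` ranges over the partitions of `i`, `ℓ(λ)` is the number
of parts, `r_k = λ.parts.count k`, and `∏_k k^{r_k} = λ.parts.prod`.  The coefficient
`i!/∏_k k^{r_k} r_k!` is an integer (the number of permutations with cycle type `λ`),
expressed here via exact natural-number division. -/
theorem stmt_1 {R : Type*} [CommRing R] (p : ℕ) (hp : 1 ≤ p) (y : Fin p → R)
    (i : ℕ) (hi1 : 1 ≤ i) (hip : i ≤ p) :
    (i.factorial : R) *
        ∑ J ∈ Finset.powersetCard i (Finset.univ : Finset (Fin p)), ∏ j ∈ J, y j =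
      ∑ lam : Nat.Partition i,
        (-1 : R) ^ (i - Multiset.card lam.parts) *
          ((i.factorial /
              (lam.parts.prod *
                ∏ k ∈ lam.parts.toFinset, (lam.parts.count k).factorial) : ℕ) : R) *
          ∏ k ∈ lam.parts.toFinset, (∑ j, y j ^ k) ^ lam.parts.count k :=
  stmt_1_general p y i
end

section
/- Let Σ be a real symmetric positive definite p×p matrix, let m ∈ ℝ^p, and let z ∈ ℝ satisfy 2|z|·λmax(Σ) < 1, where λmax(Σ) is the largest eigenvalue of Σ. Then det(I_p − 2zΣ)^{−1/2} · exp( (1/2) Tr[ ((I_p − 2zΣ)^{−1} − I_p) Σ^{−1} m mᵀ ] ) = exp( (1/2) Σ_{k=1}^∞ (2^k z^k / k) · Tr(Σ^k + k Σ^{k−1} m mᵀ) ), and the series on the right-hand side converges absolutely. -/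
/-!
Diagonalize `Σ = U diag(λ) Uᵀ` and put `w = Uᵀ m`. Conjugation by the orthogonal matrix `U`
preserves traces, determinants, powers and inverses, so with `x = 2z` every quantity splits over
the eigenvalues: `det(I − xΣ) = ∏ (1 − xλᵢ)`, the trace on the left is `∑ x wᵢ² / (1 − xλᵢ)`,
and the `k`-th term of the series is `∑ (xλᵢ)ᵏ / k + (xλᵢ)ᵏ⁻¹ x wᵢ²`. Since `|xλᵢ| < 1`, the
logarithmic and geometric series sum the latter to `∑ −log(1 − xλᵢ) + x wᵢ² / (1 − xλᵢ)`.
-/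

open Matrix Unitary Real

theorem Real.hasSum_log_add_geometric_of_abs_lt_one {x a c : ℝ} (h : |x * a| < 1) :
    HasSum (fun k : ℕ => x ^ (k + 1) / (k + 1) * (a ^ (k + 1) + (k + 1) * (a ^ k * c)))
      (-log (1 - x * a) + x * c / (1 - x * a)) := by
  have hgeom := (hasSum_geometric_of_abs_lt_one h).mul_right (x * c)
  convert (hasSum_pow_div_log_of_abs_lt_one h).add hgeom using 1
  · funext k
    field_simp
    ring
  · rw [div_eq_inv_mul, mul_comm]

namespace Matrix

variable {n α : Type*} [Fintype n] [DecidableEq n]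

theorem trace_diagonal_mul_vecMulVec [CommSemiring α] (d u v : n → α) :
    (diagonal d * vecMulVec u v).trace = ∑ i, d i * (u i * v i) := by
  simp [trace, diagonal_mul, vecMulVec_apply]

theorem inv_diagonal_of_ne_zero {K : Type*} [Field K] {d : n → K} (hd : ∀ i, d i ≠ 0) :
    (diagonal d)⁻¹ = diagonal d⁻¹ :=
  inv_eq_left_inv (by rw [diagonal_mul_diagonal]; simp [hd])

section conj

variable [CommRing α] [StarRing α] (U : unitary (Matrix n n α))

theorem trace_conjStarAlgAut (X : Matrix n n α) : (conjStarAlgAut α _ U X).trace = X.trace := by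
  rw [conjStarAlgAut_apply, trace_mul_cycle, coe_star_mul_self, one_mul]

theorem det_conjStarAlgAut (X : Matrix n n α) : (conjStarAlgAut α _ U X).det = X.det := by
  rw [conjStarAlgAut_apply, det_mul_comm, ← mul_assoc, coe_star_mul_self, one_mul]

theorem inv_conjStarAlgAut (X : Matrix n n α) :
    (conjStarAlgAut α _ U X)⁻¹ = conjStarAlgAut α _ U X⁻¹ := by
  have hU : (U : Matrix n n α)⁻¹ = star (U : Matrix n n α) :=
    inv_eq_left_inv (coe_star_mul_self U)
  have hU' : (star U : Matrix n n α)⁻¹ = U :=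
    inv_eq_left_inv (coe_mul_star_self U)
  rw [conjStarAlgAut_apply, conjStarAlgAut_apply, mul_inv_rev, mul_inv_rev, hU, hU', mul_assoc]

theorem trace_conjStarAlgAut_mul_vecMulVec [TrivialStar α] (X : Matrix n n α) (m : n → α) :
    (conjStarAlgAut α _ U X * vecMulVec m m).trace =
      (X * vecMulVec (star (U : Matrix n n α) *ᵥ m) (star (U : Matrix n n α) *ᵥ m)).trace := by
  have hw : m ᵥ* (U : Matrix n n α) = star (U : Matrix n n α) *ᵥ m := by
    rw [star_eq_conjTranspose, conjTranspose_eq_transpose_of_trivial, mulVec_transpose]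
  rw [conjStarAlgAut_apply, mul_assoc, mul_assoc, trace_mul_comm, mul_assoc, mul_assoc,
    vecMulVec_mul, mul_vecMulVec, hw]

end conj

section diagonalized

variable {U : unitary (Matrix n n ℝ)} {d : n → ℝ} {S : Matrix n n ℝ}

theorem pow_eq_conjStarAlgAut_diagonal (hS : S = conjStarAlgAut ℝ _ U (diagonal d)) (k : ℕ) :
    S ^ k = conjStarAlgAut ℝ _ U (diagonal fun i => d i ^ k) := by
  rw [hS, ← map_pow, diagonal_pow]
  rfl

theorem one_sub_smul_eq_conjStarAlgAut_diagonal (hS : S = conjStarAlgAut ℝ _ U (diagonal d))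
    (x : ℝ) : 1 - x • S = conjStarAlgAut ℝ _ U (diagonal fun i => 1 - x * d i) := by
  rw [hS, ← map_smul, ← map_one (conjStarAlgAut ℝ _ U), ← map_sub, ← diagonal_one,
    ← diagonal_smul, diagonal_sub]
  rfl

theorem trace_pow_eq_sum (hS : S = conjStarAlgAut ℝ _ U (diagonal d)) (k : ℕ) :
    (S ^ k).trace = ∑ i, d i ^ k := by
  rw [pow_eq_conjStarAlgAut_diagonal hS, trace_conjStarAlgAut, trace_diagonal]

theorem trace_pow_mul_vecMulVec_eq_sum (hS : S = conjStarAlgAut ℝ _ U (diagonal d)) (k : ℕ)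
    (m : n → ℝ) :
    (S ^ k * vecMulVec m m).trace = ∑ i, d i ^ k * (star (U : Matrix n n ℝ) *ᵥ m) i ^ 2 := by
  simp only [pow_eq_conjStarAlgAut_diagonal hS, trace_conjStarAlgAut_mul_vecMulVec,
    trace_diagonal_mul_vecMulVec, sq]

theorem det_one_sub_smul_eq_prod (hS : S = conjStarAlgAut ℝ _ U (diagonal d)) (x : ℝ) :
    (1 - x • S).det = ∏ i, (1 - x * d i) := by
  rw [one_sub_smul_eq_conjStarAlgAut_diagonal hS, det_conjStarAlgAut, det_diagonal]

theorem trace_inv_one_sub_smul_sub_one_mul_inv_mul_vecMulVec_eq_sum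
    (hS : S = conjStarAlgAut ℝ _ U (diagonal d)) (hd : ∀ i, d i ≠ 0) {x : ℝ}
    (hx : ∀ i, 1 - x * d i ≠ 0) (m : n → ℝ) :
    (((1 - x • S)⁻¹ - 1) * S⁻¹ * vecMulVec m m).trace =
      ∑ i, x * (star (U : Matrix n n ℝ) *ᵥ m) i ^ 2 / (1 - x * d i) := by
  have hdiag : ((1 - x • S)⁻¹ - 1) * S⁻¹ =
      conjStarAlgAut ℝ _ U (diagonal fun i => x / (1 - x * d i)) := by
    conv_lhs => rw [one_sub_smul_eq_conjStarAlgAut_diagonal hS, hS]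
    rw [inv_conjStarAlgAut, inv_conjStarAlgAut, inv_diagonal_of_ne_zero hx,
      inv_diagonal_of_ne_zero hd, ← map_one (conjStarAlgAut ℝ _ U), ← map_sub, ← map_mul,
      ← diagonal_one, diagonal_sub, diagonal_mul_diagonal]
    congr 2 with i
    simp only [Pi.inv_apply]
    field_simp [hd i, hx i]
    ring
  rw [hdiag, trace_conjStarAlgAut_mul_vecMulVec, trace_diagonal_mul_vecMulVec]
  exact Finset.sum_congr rfl fun i _ => by ring

theorem hasSum_trace_log_series (hS : S = conjStarAlgAut ℝ _ U (diagonal d)) {x : ℝ}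
    (hx : ∀ i, |x * d i| < 1) (m : n → ℝ) :
    HasSum (fun k : ℕ => x ^ (k + 1) / (k + 1) *
        (S ^ (k + 1) + ((k : ℝ) + 1) • (S ^ k * vecMulVec m m)).trace)
      (∑ i, (-log (1 - x * d i) +
        x * (star (U : Matrix n n ℝ) *ᵥ m) i ^ 2 / (1 - x * d i))) := by
  convert hasSum_sum fun i _ => hasSum_log_add_geometric_of_abs_lt_one
    (c := (star (U : Matrix n n ℝ) *ᵥ m) i ^ 2) (hx i) using 2 with k
  rw [trace_add, trace_smul, trace_pow_eq_sum hS, trace_pow_mul_vecMulVec_eq_sum hS,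
    smul_eq_mul, Finset.mul_sum, ← Finset.sum_add_distrib, Finset.mul_sum]

theorem rpow_det_one_sub_smul_mul_exp_trace_eq (hS : S = conjStarAlgAut ℝ _ U (diagonal d))
    (hd : ∀ i, d i ≠ 0) {x : ℝ} (hx : ∀ i, 0 < 1 - x * d i) (m : n → ℝ) :
    (1 - x • S).det ^ (-(1 / 2) : ℝ) *
        exp ((1 / 2) * (((1 - x • S)⁻¹ - 1) * S⁻¹ * vecMulVec m m).trace) =
      exp ((1 / 2) * ∑ i, (-log (1 - x * d i) +
        x * (star (U : Matrix n n ℝ) *ᵥ m) i ^ 2 / (1 - x * d i))) := by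
  rw [det_one_sub_smul_eq_prod hS,
    trace_inv_one_sub_smul_sub_one_mul_inv_mul_vecMulVec_eq_sum hS hd (fun i => (hx i).ne'),
    rpow_def_of_pos (Finset.prod_pos fun i _ => hx i), log_prod fun i _ => (hx i).ne',
    ← exp_add, Finset.sum_add_distrib, Finset.sum_neg_distrib]
  ring_nf

end diagonalized

end Matrix

/-- For a real symmetric positive definite `p × p` matrix `Σ`,
`m ∈ ℝ^p`, and `z ∈ ℝ` with `2|z|·λmax(Σ) < 1`,
`det(I − 2zΣ)^{−1/2} · exp((1/2) Tr[((I − 2zΣ)⁻¹ − I) Σ⁻¹ m mᵀ])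
  = exp((1/2) ∑_{k≥1} (2^k z^k / k) Tr(Σ^k + k Σ^{k−1} m mᵀ))`,
and the series converges absolutely (for real series, summability is absolute
convergence).  The series over `k ≥ 1` is indexed by `k = k' + 1`, `k' : ℕ`. -/
theorem stmt_3 (p : ℕ) (S : Matrix (Fin p) (Fin p) ℝ) (hS : S.PosDef)
    (m : Fin p → ℝ) (z : ℝ)
    (hz : 2 * |z| * (⨆ i, hS.1.eigenvalues i) < 1) :
    Summable (fun k : ℕ =>
      2 ^ (k + 1) * z ^ (k + 1) / (k + 1) *
        (S ^ (k + 1) + ((k : ℝ) + 1) • (S ^ k * Matrix.vecMulVec m m)).trace) ∧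
    (1 - (2 * z) • S).det ^ (-(1 / 2) : ℝ) *
        Real.exp ((1 / 2) *
          (((1 - (2 * z) • S)⁻¹ - 1) * S⁻¹ * Matrix.vecMulVec m m).trace) =
      Real.exp ((1 / 2) * ∑' k : ℕ,
        2 ^ (k + 1) * z ^ (k + 1) / (k + 1) *
          (S ^ (k + 1) + ((k : ℝ) + 1) • (S ^ k * Matrix.vecMulVec m m)).trace) := by
  have hspec : S = conjStarAlgAut ℝ _ hS.1.eigenvectorUnitary (diagonal hS.1.eigenvalues) := by
    simpa [-conjStarAlgAut_apply] using hS.1.spectral_theorem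
  have hx : ∀ i, |2 * z * hS.1.eigenvalues i| < 1 := fun i => by
    have hle := le_ciSup (Set.finite_range hS.1.eigenvalues).bddAbove i
    rw [abs_mul, abs_mul, abs_two, abs_of_pos (hS.eigenvalues_pos i)]
    exact (mul_le_mul_of_nonneg_left hle (by positivity)).trans_lt hz
  have hsum := hasSum_trace_log_series hspec hx m
  simp_rw [← mul_pow]
  refine ⟨hsum.summable, ?_⟩
  rw [hsum.tsum_eq]
  exact rpow_det_one_sub_smul_mul_exp_trace_eq hspec (fun i => (hS.eigenvalues_pos i).ne')
    (fun i => sub_pos.2 (abs_lt.1 (hx i)).2) m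
end

section
/- Let ξ be a random vector in ℝ^p whose coordinates are i.i.d. standard normal random variables, let Σ be a real symmetric positive definite p×p matrix with positive semidefinite square root Σ^{1/2}, let m ∈ ℝ^p, and set X = m + Σ^{1/2} ξ. Then for every z ∈ ℝ with 2|z|·λmax(Σ) < 1 (λmax(Σ) being the largest eigenvalue of Σ), E[ exp(z‖X‖²) ] = exp( (1/2) Σ_{k=1}^∞ (2^k z^k / k) · Tr(Σ^k + k Σ^{k−1} m mᵀ) ), where ‖X‖² = XᵀX is the squared Euclidean norm, and the series converges absolutely. -/
open Matrix MeasureTheory ProbabilityTheory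

section

open scoped ComplexOrder

/-- The positive semidefinite square root of a positive semidefinite matrix
(the definition `Matrix.PosSemidef.sqrt` of the older Mathlib, since removed). -/
noncomputable def Matrix.PosSemidef.sqrt {n 𝕜 : Type*} [Fintype n] [RCLike 𝕜] [DecidableEq n]
    {A : Matrix n n 𝕜} (hA : A.PosSemidef) : Matrix n n 𝕜 :=
  hA.1.eigenvectorUnitary.1 * diagonal ((↑) ∘ (√·) ∘ hA.1.eigenvalues) *
  (star hA.1.eigenvectorUnitary : Matrix n n 𝕜)

end

/-!
Diagonalise `Σ = U diag(λ) Uᵀ`. The standard Gaussian on `ℝ^p` is invariant under the orthogonal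
map `U`, so substituting `ξ = U y` gives `‖X‖² = ∑ᵢ (μᵢ + √λᵢ yᵢ)²` with `μ = Uᵀ m`, and the
expectation factorises into one-dimensional Gaussian integrals
`E[exp (z (a + b t)²)] = exp (z a² / (1 - 2 z b²)) / √(1 - 2 z b²)`, obtained by completing the
square. On the other side `Tr Σᵏ = ∑ᵢ λᵢᵏ` and `Tr (Σᵏ m mᵀ) = ∑ᵢ λᵢᵏ μᵢ²`, so the series splits
over `i` into the logarithmic series of `-log (1 - 2 z λᵢ)` and the geometric series of
`2 z μᵢ² / (1 - 2 z λᵢ)`; half their sum is the logarithm of the `i`-th factor above.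
-/

open Real

namespace Matrix

variable {ι : Type*} [Fintype ι] [DecidableEq ι]

lemma sum_sq_mulVec_of_mem_unitaryGroup {U : Matrix ι ι ℝ} (hU : U ∈ unitaryGroup ι ℝ)
    (v : ι → ℝ) : ∑ i, (U *ᵥ v) i ^ 2 = ∑ i, v i ^ 2 := by
  have hUU : Uᵀ * U = 1 := by
    simpa [star_eq_conjTranspose, conjTranspose_eq_transpose_of_trivial] using
      mem_unitaryGroup_iff'.mp hU
  have : (U *ᵥ v) ⬝ᵥ (U *ᵥ v) = v ⬝ᵥ v := by
    rw [dotProduct_mulVec, ← vecMul_transpose, vecMul_vecMul, hUU, vecMul_one]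
  simpa [dotProduct, sq] using this

variable {A : Matrix ι ι ℝ}

namespace IsHermitian

variable (hA : A.IsHermitian)
include hA

lemma pow_eq_conj_diagonal (k : ℕ) :
    A ^ k = (hA.eigenvectorUnitary : Matrix ι ι ℝ) * diagonal (hA.eigenvalues ^ k) *
      star (hA.eigenvectorUnitary : Matrix ι ι ℝ) := by
  conv_lhs => rw [hA.spectral_theorem]
  rw [← map_pow, diagonal_pow]
  simp [RCLike.ofReal_real_eq_id]

lemma trace_pow (k : ℕ) : (A ^ k).trace = ∑ i, hA.eigenvalues i ^ k := by
  rw [hA.pow_eq_conj_diagonal, trace_mul_cycle, Unitary.coe_star_mul_self, one_mul,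
    trace_diagonal]
  rfl

lemma trace_pow_mul_vecMulVec (k : ℕ) (m : ι → ℝ) :
    (A ^ k * vecMulVec m m).trace =
      ∑ i, hA.eigenvalues i ^ k * (star (hA.eigenvectorUnitary : Matrix ι ι ℝ) *ᵥ m) i ^ 2 := by
  rw [mul_vecMulVec, trace_vecMulVec, hA.pow_eq_conj_diagonal, ← mulVec_mulVec, ← mulVec_mulVec,
    dotProduct_comm, dotProduct_mulVec, ← mulVec_transpose, ← conjTranspose_eq_transpose_of_trivial,
    ← star_eq_conjTranspose]
  simp only [dotProduct, mulVec_diagonal, Pi.pow_apply]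
  exact Finset.sum_congr rfl fun i _ ↦ by ring

/-- The sum is `-log det (1 - 2zA) + 2z mᵀ(1 - 2zA)⁻¹m`, written in an eigenbasis of `A`. -/
lemma hasSum_cumulant_series (m : ι → ℝ) {z : ℝ} (hz : ∀ i, |2 * z * hA.eigenvalues i| < 1) :
    HasSum (fun k : ℕ ↦ 2 ^ (k + 1) * z ^ (k + 1) / (k + 1) *
        (A ^ (k + 1) + ((k : ℝ) + 1) • (A ^ k * vecMulVec m m)).trace)
      (∑ i, (-log (1 - 2 * z * hA.eigenvalues i) +
        2 * z * (star (hA.eigenvectorUnitary : Matrix ι ι ℝ) *ᵥ m) i ^ 2 *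
          (1 - 2 * z * hA.eigenvalues i)⁻¹)) := by
  set μ := star (hA.eigenvectorUnitary : Matrix ι ι ℝ) *ᵥ m
  have hterm : ∀ k : ℕ, 2 ^ (k + 1) * z ^ (k + 1) / (k + 1) *
      (A ^ (k + 1) + ((k : ℝ) + 1) • (A ^ k * vecMulVec m m)).trace =
        ∑ i, ((2 * z * hA.eigenvalues i) ^ (k + 1) / (k + 1) +
          2 * z * μ i ^ 2 * (2 * z * hA.eigenvalues i) ^ k) := by
    intro k
    rw [trace_add, trace_smul, hA.trace_pow, hA.trace_pow_mul_vecMulVec, smul_eq_mul,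
      Finset.mul_sum, ← Finset.sum_add_distrib, Finset.mul_sum]
    refine Finset.sum_congr rfl fun i _ ↦ ?_
    field_simp
    ring
  simp_rw [hterm]
  exact hasSum_sum fun i _ ↦ (hasSum_pow_div_log_of_abs_lt_one (hz i)).add
    ((hasSum_geometric_of_abs_lt_one (hz i)).mul_left _)

end IsHermitian

lemma PosSemidef.sqrt_mulVec_eigenvectorUnitary_mulVec (hA : A.PosSemidef) (y : ι → ℝ) :
    hA.sqrt *ᵥ ((hA.1.eigenvectorUnitary : Matrix ι ι ℝ) *ᵥ y) =
      (hA.1.eigenvectorUnitary : Matrix ι ι ℝ) *ᵥ fun i ↦ √(hA.1.eigenvalues i) * y i := by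
  rw [PosSemidef.sqrt, mulVec_mulVec, mul_assoc _ (star _), Unitary.coe_star_mul_self, mul_one,
    ← mulVec_mulVec]
  congr 1
  ext i
  simp [mulVec_diagonal]

end Matrix

namespace ProbabilityTheory

variable {ι : Type*} [Fintype ι]

lemma integral_exp_mul_sq_gaussianReal {z a b : ℝ} (h : 2 * z * b ^ 2 < 1) :
    ∫ t, exp (z * (a + b * t) ^ 2) ∂gaussianReal 0 1 =
      exp (z * a ^ 2 / (1 - 2 * z * b ^ 2)) / √(1 - 2 * z * b ^ 2) := by
  set c := 1 - 2 * z * b ^ 2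
  have hc : 0 < c := by simp only [c]; linarith
  have hsq : ∀ t, gaussianPDFReal 0 1 t • exp (z * (a + b * t) ^ 2) =
      ((√(2 * π))⁻¹ * exp (z * a ^ 2 / c)) * exp (-(c / 2) * (t - 2 * z * a * b / c) ^ 2) := by
    intro t
    simp only [gaussianPDFReal, NNReal.coe_one, mul_one, sub_zero, smul_eq_mul]
    rw [mul_assoc, mul_assoc, ← exp_add, ← exp_add]
    congr 2
    field_simp
    ring
  rw [integral_gaussianReal_eq_integral_smul one_ne_zero]
  simp_rw [hsq]
  rw [integral_const_mul, integral_sub_right_eq_self (fun t ↦ exp (-(c / 2) * t ^ 2)),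
    integral_gaussian, div_div_eq_mul_div, sqrt_div' _ hc.le, mul_comm π 2]
  field_simp

variable [DecidableEq ι]

lemma map_mulVec_pi_gaussianReal {U : Matrix ι ι ℝ} (hU : U ∈ unitaryGroup ι ℝ) :
    (Measure.pi fun _ : ι ↦ gaussianReal 0 1).map (U *ᵥ ·) =
      Measure.pi fun _ : ι ↦ gaussianReal 0 1 := by
  let e : EuclideanSpace ℝ ι ≃ₗᵢ[ℝ] EuclideanSpace ℝ ι :=
    Unitary.linearIsometryEquiv ⟨toEuclideanCLM (𝕜 := ℝ) (n := ι) U, Unitary.map_mem _ hU⟩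
  have hpi : (stdGaussian (EuclideanSpace ℝ ι)).map WithLp.ofLp =
      Measure.pi fun _ : ι ↦ gaussianReal 0 1 := by
    rw [← map_pi_eq_stdGaussian, Measure.map_map (by fun_prop) (by fun_prop)]
    exact Measure.map_id
  have he : (U *ᵥ ·) ∘ WithLp.ofLp = WithLp.ofLp ∘ e := rfl
  rw [← hpi, Measure.map_map (by fun_prop) (by fun_prop), he,
    ← Measure.map_map (by fun_prop) (by fun_prop), stdGaussian_map]

lemma integral_exp_mul_sum_sq_add_sqrt_mulVec {S : Matrix ι ι ℝ} (hS : S.PosSemidef)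
    (m : ι → ℝ) {z : ℝ} (hz : ∀ i, 2 * z * hS.1.eigenvalues i < 1) :
    ∫ ξ, exp (z * ∑ j, (m j + (hS.sqrt *ᵥ ξ) j) ^ 2) ∂(Measure.pi fun _ : ι ↦ gaussianReal 0 1) =
      ∏ i, exp (z * (star (hS.1.eigenvectorUnitary : Matrix ι ι ℝ) *ᵥ m) i ^ 2 /
        (1 - 2 * z * hS.1.eigenvalues i)) / √(1 - 2 * z * hS.1.eigenvalues i) := by
  set U := (hS.1.eigenvectorUnitary : Matrix ι ι ℝ)
  set μ := star U *ᵥ m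
  have hnorm : ∀ y, ∑ j, (m j + (hS.sqrt *ᵥ (U *ᵥ y)) j) ^ 2 =
      ∑ j, (μ j + √(hS.1.eigenvalues j) * y j) ^ 2 := by
    intro y
    have hshift : m + U *ᵥ (fun i ↦ √(hS.1.eigenvalues i) * y i) =
        U *ᵥ (μ + fun i ↦ √(hS.1.eigenvalues i) * y i) := by
      rw [mulVec_add, mulVec_mulVec, Unitary.mul_star_self_of_mem hS.1.eigenvectorUnitary.2,
        one_mulVec]
    calc ∑ j, (m j + (hS.sqrt *ᵥ (U *ᵥ y)) j) ^ 2
        = ∑ j, (U *ᵥ (μ + fun i ↦ √(hS.1.eigenvalues i) * y i)) j ^ 2 := by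
          rw [hS.sqrt_mulVec_eigenvectorUnitary_mulVec, ← hshift]
          rfl
      _ = _ := sum_sq_mulVec_of_mem_unitaryGroup hS.1.eigenvectorUnitary.2 _
  rw [← map_mulVec_pi_gaussianReal (U := U) hS.1.eigenvectorUnitary.2,
    integral_map (by fun_prop) (by fun_prop)]
  simp_rw [hnorm, Finset.mul_sum, exp_sum]
  rw [integral_fintype_prod_eq_prod
    (f := fun j t ↦ exp (z * (μ j + √(hS.1.eigenvalues j) * t) ^ 2))]
  refine Finset.prod_congr rfl fun i _ ↦ ?_
  have hsqrt := sq_sqrt (hS.eigenvalues_nonneg i)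
  rw [integral_exp_mul_sq_gaussianReal (by rw [hsqrt]; exact hz i), hsqrt]

end ProbabilityTheory

/-- Let `ξ` have law the product over `Fin p` of standard Gaussians,
let `Σ` be symmetric positive definite with psd square root `Σ^{1/2}`, `m ∈ ℝ^p`,
`X = m + Σ^{1/2} ξ`.  For `z ∈ ℝ` with `2|z|·λmax(Σ) < 1`,
`E[exp(z‖X‖²)] = exp((1/2) ∑_{k≥1} (2^k z^k/k) Tr(Σ^k + k Σ^{k−1} m mᵀ))`,
and the series converges absolutely. -/
theorem stmt_4 (p : ℕ) (S : Matrix (Fin p) (Fin p) ℝ) (hS : S.PosDef)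
    (m : Fin p → ℝ) (z : ℝ)
    (hz : 2 * |z| * (⨆ i, hS.1.eigenvalues i) < 1) :
    Summable (fun k : ℕ =>
      2 ^ (k + 1) * z ^ (k + 1) / (k + 1) *
        (S ^ (k + 1) + ((k : ℝ) + 1) • (S ^ k * Matrix.vecMulVec m m)).trace) ∧
    (∫ ξ : Fin p → ℝ,
        Real.exp (z * ∑ j, (m j + hS.posSemidef.sqrt.mulVec ξ j) ^ 2)
        ∂(Measure.pi fun _ => gaussianReal 0 1)) =
      Real.exp ((1 / 2) * ∑' k : ℕ,
        2 ^ (k + 1) * z ^ (k + 1) / (k + 1) *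
          (S ^ (k + 1) + ((k : ℝ) + 1) • (S ^ k * Matrix.vecMulVec m m)).trace) := by
  have hbound : ∀ i, |2 * z * hS.1.eigenvalues i| < 1 := fun i ↦ by
    rw [abs_mul, abs_mul, abs_two, abs_of_pos (hS.eigenvalues_pos i)]
    exact (mul_le_mul_of_nonneg_left (le_ciSup (Set.finite_range _).bddAbove i)
      (by positivity)).trans_lt hz
  have hsum := hS.1.hasSum_cumulant_series m hbound
  refine ⟨hsum.summable, ?_⟩
  rw [integral_exp_mul_sum_sq_add_sqrt_mulVec hS.posSemidef m fun i ↦ (abs_lt.mp (hbound i)).2,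
    hsum.tsum_eq, Finset.mul_sum, exp_sum]
  refine Finset.prod_congr rfl fun i _ ↦ ?_
  rw [sqrt_eq_rpow, rpow_def_of_pos (sub_pos.mpr (abs_lt.mp (hbound i)).2), ← exp_sub]
  congr 1
  field_simp
  ring
end

section
/- Let Z be a p×n random matrix with i.i.d. standard normal entries, let Σ be a real symmetric positive semidefinite p×p matrix, and set W = (Σ^{1/2}Z)(Σ^{1/2}Z)ᵀ (the central Wishart matrix W_p(n,Σ,0)). Then for every integer i with 1 ≤ i ≤ p ≤ n, E[ Tr_i(W) ] = (n)_i · Tr_i(Σ). -/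
open Matrix MeasureTheory ProbabilityTheory

/-- The law of a `p × n` random matrix with i.i.d. standard normal entries. -/
noncomputable def gaussMatrix (p n : ℕ) : Measure (Fin p → Fin n → ℝ) :=
  Measure.pi fun _ : Fin p => Measure.pi fun _ : Fin n => gaussianReal 0 1

open Classical in
/-- `Tr_i(S)`: the `i`-th elementary symmetric function of the eigenvalues (listed with
multiplicity) of the real symmetric matrix `S`; junk value `0` if `S` is not symmetric. -/
noncomputable def trElem {ι : Type*} [Fintype ι] [DecidableEq ι]
    (S : Matrix ι ι ℝ) (i : ℕ) : ℝ :=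
  if h : S.IsHermitian then
    ∑ J ∈ Finset.powersetCard i (Finset.univ : Finset ι), ∏ j ∈ J, h.eigenvalues j
  else 0

/-- The positive semidefinite square root, as `Matrix.PosSemidef.sqrt` was defined in the
older Mathlib (that declaration has since been removed). -/
noncomputable def psdSqrt {n : Type*} [Fintype n] [DecidableEq n]
    {A : Matrix n n ℝ} (hA : A.PosSemidef) : Matrix n n ℝ :=
  (hA.1.eigenvectorUnitary : Matrix n n ℝ) * diagonal ((↑) ∘ (√·) ∘ hA.1.eigenvalues) *
    (star (hA.1.eigenvectorUnitary : Matrix n n ℝ))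

/-!
For symmetric `M`, `i! · Tr_i(M) = ∑_{g : Fin i → ι} det M[g, g]` (sum of principal minors), and
the symmetrised Cauchy–Binet formula `i! · det (PPᵀ) = ∑_{h : Fin i → m} det P[·, h] ^ 2` writes
each principal minor of `W = (AZ)(AZ)ᵀ`, `A = Σ^{1/2}`, as a sum of squares
`det (A[g, ·] Z[·, h]) ^ 2`. For injective `h` the columns `Z[·, h]` are again i.i.d. with mean `0`
and variance `1`; expanding `det (BY) = ∑_f det B[·, f] ∏_k Y_{f k, k}`, only the diagonal terms of
the square survive in expectation, so `E det (BY) ^ 2 = ∑_f det B[·, f] ^ 2 = i! · det (BBᵀ)`.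
Non-injective `h` contribute `0`, and there are `(n)_i` injective ones.
-/

open Finset

namespace Matrix

section CauchyBinet

variable {ι m R : Type*} [Fintype ι] [DecidableEq ι] [Fintype m] [CommRing R]

theorem det_mul_eq_sum_det_submatrix_mul_prod (A : Matrix ι m R) (B : Matrix m ι R) :
    (A * B).det = ∑ f : ι → m, (A.submatrix id f).det * ∏ k, B (f k) k := by
  simp only [det_apply', mul_apply, prod_univ_sum, Fintype.piFinset_univ, mul_sum, sum_mul,
    submatrix_apply, id, prod_mul_distrib, ← mul_assoc]
  exact sum_comm

/-- Averaging `det_mul_eq_sum_det_submatrix_mul_prod` over the reindexings `f ↦ f ∘ σ`. -/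
theorem factorial_card_mul_det_mul_eq_sum (A : Matrix ι m R) (B : Matrix m ι R) :
    ((Fintype.card ι).factorial : R) * (A * B).det =
      ∑ f : ι → m, (A.submatrix id f).det * (B.submatrix f id).det := by
  have hreindex : ∀ σ : Equiv.Perm ι, (A * B).det =
      ∑ f : ι → m, (Equiv.Perm.sign σ : R) * (A.submatrix id f).det * ∏ k, B (f (σ k)) k := by
    intro σ
    rw [det_mul_eq_sum_det_submatrix_mul_prod,
      ← (Equiv.arrowCongr σ.symm (Equiv.refl m)).sum_comp]
    refine sum_congr rfl fun f _ => ?_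
    change ((A.submatrix id f).submatrix id σ).det * ∏ k, B (f (σ k)) k = _
    rw [det_permute']
  rw [← Fintype.card_perm, ← nsmul_eq_mul, ← card_univ, ← sum_const,
    sum_congr rfl fun σ _ => hreindex σ, sum_comm]
  refine sum_congr rfl fun f _ => ?_
  rw [det_apply' (B.submatrix f id), mul_sum]
  refine sum_congr rfl fun σ _ => ?_
  simp only [submatrix_apply, id]
  ring

theorem factorial_card_mul_det_mul_transpose_eq_sum (P : Matrix ι m R) :
    ((Fintype.card ι).factorial : R) * (P * Pᵀ).det =
      ∑ f : ι → m, (P.submatrix id f).det ^ 2 := by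
  rw [factorial_card_mul_det_mul_eq_sum]
  refine sum_congr rfl fun f _ => ?_
  rw [← transpose_submatrix, det_transpose, sq]

theorem sq_det_mul_transpose_eq_sum_prod {κ : Type*} [Fintype κ] (B : Matrix ι κ R)
    (Y : ι → κ → R) :
    (B * (of Y)ᵀ).det ^ 2 = ∑ f : ι → κ, ∑ g : ι → κ,
      (B.submatrix id f).det * (B.submatrix id g).det * ∏ k, Y k (f k) * Y k (g k) := by
  simp only [det_mul_eq_sum_det_submatrix_mul_prod, transpose_apply, of_apply, sq, sum_mul_sum,
    prod_mul_distrib]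
  refine sum_congr rfl fun f _ => sum_congr rfl fun g _ => ?_
  ring

theorem det_mul_submatrix_eq_zero_of_not_injective {κ ν : Type*} [Fintype κ] (B : Matrix ι κ R)
    (N : Matrix κ ν R) {h : ι → ν} (hh : ¬ Function.Injective h) :
    (B * N.submatrix id h).det = 0 := by
  obtain ⟨a, b, hab, hne⟩ := Function.not_injective_iff.mp hh
  exact det_zero_of_column_eq hne fun j => by simp [mul_apply, hab]

end CauchyBinet

theorem det_submatrix_eq_zero_of_not_injective {ι κ R : Type*} [Fintype κ] [DecidableEq κ]
    [CommRing R] (M : Matrix ι ι R) {g : κ → ι} (hg : ¬ Function.Injective g) :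
    (M.submatrix g g).det = 0 := by
  obtain ⟨a, b, hab, hne⟩ := Function.not_injective_iff.mp hg
  exact det_zero_of_row_eq hne (by ext j; simp [hab])

end Matrix

theorem Finset.card_filter_map_univ_eq_factorial {ι : Type*} [Fintype ι] [DecidableEq ι] {k : ℕ}
    {s : Finset ι} (hs : s.card = k) :
    #{g : Fin k ↪ ι | univ.map g = s} = k.factorial := by
  have e₀ : Fin k ≃ s := (Fintype.equivFinOfCardEq (by simp [hs])).symm
  have hcard : Fintype.card (Fin k ≃ s) = k.factorial := by
    rw [Fintype.card_equiv e₀, Fintype.card_fin]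
  rw [← hcard, ← card_univ]
  symm
  refine card_bij (fun e _ => e.toEmbedding.trans (Function.Embedding.subtype (· ∈ s)))
    (fun e _ => ?_) (fun e _ e' _ h => ?_) (fun g hg => ?_)
  · rw [mem_filter]
    refine ⟨mem_univ _, ?_⟩
    ext x
    simp only [mem_univ, true_and, mem_map, Function.Embedding.trans_apply,
      Equiv.coe_toEmbedding, Function.Embedding.coe_subtype]
    exact ⟨fun ⟨j, hj⟩ => hj ▸ (e j).2, fun hx => ⟨e.symm ⟨x, hx⟩, by simp⟩⟩
  · ext j
    exact DFunLike.congr_fun h j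
  · have hgs := (mem_filter.mp hg).2
    have hmem : ∀ j, g j ∈ s := fun j => hgs ▸ mem_map_of_mem g (mem_univ j)
    refine ⟨Equiv.ofBijective (fun j => ⟨g j, hmem j⟩) ?_, mem_univ _, ?_⟩
    · rw [Fintype.bijective_iff_injective_and_card]
      exact ⟨fun a b h => g.injective (congrArg Subtype.val h), by simp [hs]⟩
    · ext j
      rfl

theorem Finset.sum_embedding_map_univ_eq_factorial_smul {ι M : Type*} [Fintype ι] [DecidableEq ι]
    [AddCommMonoid M] (k : ℕ) (G : Finset ι → M) :
    ∑ g : Fin k ↪ ι, G (univ.map g) = k.factorial • ∑ s ∈ powersetCard k univ, G s := by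
  rw [← sum_fiberwise_of_maps_to (g := fun g : Fin k ↪ ι => univ.map g) (t := powersetCard k univ)
    (fun g _ => by simp [mem_powersetCard]), smul_sum]
  refine sum_congr rfl fun s hs => ?_
  rw [sum_congr rfl fun g hg => congrArg G (mem_filter.mp hg).2, sum_const,
    card_filter_map_univ_eq_factorial (mem_powersetCard.mp hs).2]

theorem Fintype.sum_embedding_eq_sum_of_not_injective {α β M : Type*} [Fintype α] [Fintype β]
    [DecidableEq α] [DecidableEq β] [AddCommMonoid M] (F : (α → β) → M)
    (hF : ∀ f, ¬ Function.Injective f → F f = 0) :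
    ∑ f : α ↪ β, F f = ∑ f : α → β, F f := by
  symm
  rw [← Finset.sum_filter_of_ne (p := Function.Injective) fun f _ hf => not_imp_comm.mp (hF f) hf,
    sum_subtype _ (p := Function.Injective) fun f => by simp]
  exact Fintype.sum_equiv (Equiv.subtypeInjectiveEquivEmbedding α β) _ _ fun _ => rfl

theorem Fintype.sum_ite_injective {α β M : Type*} [Fintype α] [Fintype β] [DecidableEq α]
    [DecidableEq β] [AddCommMonoid M] (c : M) :
    ∑ h : α → β, (if Function.Injective h then c else 0) =
      (Fintype.card β).descFactorial (Fintype.card α) • c := by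
  rw [← Fintype.sum_embedding_eq_sum_of_not_injective _ fun h hh => if_neg hh]
  simp only [EmbeddingLike.injective, if_true, sum_const, card_univ, Fintype.card_embedding_eq]

namespace Matrix.IsHermitian

variable {ι : Type*} [Fintype ι] [DecidableEq ι] {M : Matrix ι ι ℝ}

/-- Vieta's formula for the characteristic polynomial, compared with its expansion in principal
minors. -/
theorem trElem_eq_sum_det_submatrix (hM : M.IsHermitian) (i : ℕ) :
    trElem M i =
      ∑ s ∈ powersetCard i univ, (M.submatrix (Subtype.val : s → ι) Subtype.val).det := by
  rw [trElem, dif_pos hM]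
  by_cases hi : i ≤ Fintype.card ι
  · have hvieta := Multiset.prod_X_sub_C_coeff (univ.val.map hM.eigenvalues)
      (k := Fintype.card ι - i) (by simp)
    rw [Multiset.map_map, Function.comp_def, Multiset.card_map, card_val, card_univ,
      Nat.sub_sub_self hi, esymm_map_val] at hvieta
    have hchar : M.charpoly = ∏ j, (Polynomial.X - Polynomial.C (hM.eigenvalues j)) := by
      simpa using hM.charpoly_eq
    rw [← Finset.prod, ← hchar, M.charpoly_coeff_eq_sum_minors i hi] at hvieta
    exact (mul_left_cancel₀ (pow_ne_zero i (neg_ne_zero.mpr one_ne_zero)) hvieta).symm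
  · rw [powersetCard_eq_empty.mpr (by simpa using hi), sum_empty, sum_empty]

theorem factorial_mul_trElem_eq_sum_det_submatrix (hM : M.IsHermitian) (i : ℕ) :
    (i.factorial : ℝ) * trElem M i = ∑ g : Fin i → ι, (M.submatrix g g).det := by
  rw [hM.trElem_eq_sum_det_submatrix, ← nsmul_eq_mul, ← sum_embedding_map_univ_eq_factorial_smul,
    ← Fintype.sum_embedding_eq_sum_of_not_injective _ fun g hg =>
      M.det_submatrix_eq_zero_of_not_injective hg]
  refine sum_congr rfl fun g _ => ?_
  let e : Fin i ≃ univ.map g := (Equiv.subtypeUnivEquiv mem_univ).symm.trans (equivMap g univ)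
  rw [← det_submatrix_equiv_self e]
  rfl

end Matrix.IsHermitian

theorem Matrix.isHermitian_mul_transpose_self {ι m : Type*} [Fintype m] (P : Matrix ι m ℝ) :
    (P * Pᵀ).IsHermitian :=
  isHermitian_iff_isSymm.mpr (by rw [IsSymm, transpose_mul, transpose_transpose])

theorem Matrix.factorial_sq_mul_trElem_mul_transpose {ι m : Type*} [Fintype ι] [DecidableEq ι]
    [Fintype m] (P : Matrix ι m ℝ) (i : ℕ) :
    ((i.factorial * i.factorial : ℕ) : ℝ) * trElem (P * Pᵀ) i =
      ∑ g : Fin i → ι, ∑ h : Fin i → m, (P.submatrix g h).det ^ 2 := by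
  rw [Nat.cast_mul, mul_assoc,
    (isHermitian_mul_transpose_self P).factorial_mul_trElem_eq_sum_det_submatrix, mul_sum]
  refine sum_congr rfl fun g _ => ?_
  have hgram := factorial_card_mul_det_mul_transpose_eq_sum (P.submatrix g id)
  rw [Fintype.card_fin] at hgram
  rw [submatrix_mul _ _ g id g Function.bijective_id, ← transpose_submatrix, hgram]
  simp only [submatrix_submatrix, Function.comp_id, Function.id_comp]

theorem MeasureTheory.Measure.map_pi_pi_comp_of_injective {X : Type*} [MeasurableSpace X]
    (μ : Measure X) [IsProbabilityMeasure μ] {ι κ ν : Type*} [Fintype ι] [Fintype κ] [Fintype ν]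
    {h : ι → ν} (hh : Function.Injective h) :
    (Measure.pi fun _ : κ => Measure.pi fun _ : ν => μ).map (fun Z k l => Z l (h k)) =
      Measure.pi fun _ : ι => Measure.pi fun _ : κ => μ := by
  have hφ : Function.Injective fun p : ι × κ => (p.2, h p.1) := fun p q hpq => by
    simp only [Prod.mk.injEq] at hpq
    exact Prod.ext (hh hpq.2) hpq.1
  simp_rw [← Measure.infinitePi_eq_pi]
  rw [← Measure.infinitePi_map_curry (fun (_ : κ) (_ : ν) => μ),
    Measure.map_map (by fun_prop) (by fun_prop)]
  have : (fun Z : κ → ν → X => fun k l => Z l (h k)) ∘ MeasurableEquiv.curry κ ν X =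
      MeasurableEquiv.curry ι κ X ∘ fun x p => x (p.2, h p.1) := rfl
  rw [this, ← Measure.map_map (by fun_prop) (by fun_prop),
    Measure.map_infinitePi_infinitePi_of_inj hφ,
    Measure.infinitePi_map_curry (fun (_ : ι) (_ : κ) => μ)]

section IidEntries

variable {μ : Measure ℝ} [IsProbabilityMeasure μ] {κ : Type*} [Fintype κ]

theorem integrable_eval_mul_eval (hμ : MemLp id 2 μ) (a b : κ) :
    Integrable (fun y : κ → ℝ => y a * y b) (Measure.pi fun _ => μ) :=
  (hμ.comp_measurePreserving (measurePreserving_eval _ a)).integrable_mul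
    (hμ.comp_measurePreserving (measurePreserving_eval _ b)) (p := 2) (q := 2)

theorem integral_eval_mul_eval [DecidableEq κ] (hμ_mean : ∫ x, x ∂μ = 0)
    (hμ_var : ∫ x, x ^ 2 ∂μ = 1) (a b : κ) :
    ∫ y : κ → ℝ, y a * y b ∂(Measure.pi fun _ => μ) = if a = b then 1 else 0 := by
  split_ifs with hab
  · subst hab
    simpa [sq] using (integral_comp_eval (μ := fun _ : κ => μ) (i := a)
      (f := fun x : ℝ => x ^ 2) (by fun_prop)).trans hμ_var
  · have hindep := (iIndepFun_pi (μ := fun _ : κ => μ) (X := fun _ x => x)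
      fun _ => aemeasurable_id).indepFun hab
    rw [hindep.integral_fun_mul_eq_mul_integral (measurable_pi_apply a).aestronglyMeasurable
      (measurable_pi_apply b).aestronglyMeasurable]
    simp [integral_eval, hμ_mean]

variable {ι : Type*} [Fintype ι]

theorem integrable_prod_eval_mul_eval (hμ : MemLp id 2 μ) (f g : ι → κ) :
    Integrable (fun Y : ι → κ → ℝ => ∏ k, Y k (f k) * Y k (g k))
      (Measure.pi fun _ => Measure.pi fun _ => μ) :=
  Integrable.fintype_prod fun k => integrable_eval_mul_eval hμ (f k) (g k)

theorem integral_prod_eval_mul_eval [DecidableEq κ] (hμ_mean : ∫ x, x ∂μ = 0)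
    (hμ_var : ∫ x, x ^ 2 ∂μ = 1) (f g : ι → κ) :
    ∫ Y : ι → κ → ℝ, ∏ k, Y k (f k) * Y k (g k) ∂(Measure.pi fun _ => Measure.pi fun _ => μ) =
      if f = g then 1 else 0 := by
  rw [integral_fintype_prod_eq_prod (fun k (y : κ → ℝ) => y (f k) * y (g k))]
  simp only [integral_eval_mul_eval hμ_mean hμ_var, Fintype.prod_boole, funext_iff]

variable [DecidableEq ι]

theorem integrable_sq_det_mul_transpose (hμ : MemLp id 2 μ) (B : Matrix ι κ ℝ) :
    Integrable (fun Y : ι → κ → ℝ => (B * (of Y)ᵀ).det ^ 2)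
      (Measure.pi fun _ => Measure.pi fun _ => μ) := by
  simp only [sq_det_mul_transpose_eq_sum_prod]
  exact integrable_finsetSum _ fun f _ => integrable_finsetSum _ fun g _ =>
    (integrable_prod_eval_mul_eval hμ f g).const_mul _

theorem integral_sq_det_mul_transpose (hμ : MemLp id 2 μ) (hμ_mean : ∫ x, x ∂μ = 0)
    (hμ_var : ∫ x, x ^ 2 ∂μ = 1) (B : Matrix ι κ ℝ) :
    ∫ Y : ι → κ → ℝ, (B * (of Y)ᵀ).det ^ 2 ∂(Measure.pi fun _ => Measure.pi fun _ => μ) =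
      (Fintype.card ι).factorial * (B * Bᵀ).det := by
  classical
  simp only [sq_det_mul_transpose_eq_sum_prod]
  rw [integral_finsetSum _ fun f _ => integrable_finsetSum _ fun g _ =>
    (integrable_prod_eval_mul_eval hμ f g).const_mul _]
  simp only [integral_finsetSum _ fun g _ => (integrable_prod_eval_mul_eval hμ _ g).const_mul _,
    integral_const_mul, integral_prod_eval_mul_eval hμ_mean hμ_var, mul_ite, mul_one, mul_zero,
    sum_ite_eq, mem_univ, if_true, factorial_card_mul_det_mul_transpose_eq_sum, sq]

variable {ν : Type*} [Fintype ν]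

theorem integrable_sq_det_mul_submatrix (hμ : MemLp id 2 μ) (B : Matrix ι κ ℝ) (h : ι → ν) :
    Integrable (fun Z : κ → ν → ℝ => (B * (of Z).submatrix id h).det ^ 2)
      (Measure.pi fun _ => Measure.pi fun _ => μ) := by
  by_cases hh : Function.Injective h
  · have hG := integrable_sq_det_mul_transpose hμ B
    rw [← Measure.map_pi_pi_comp_of_injective μ hh] at hG
    exact hG.comp_aemeasurable (Measurable.aemeasurable (by fun_prop))
  · simp [det_mul_submatrix_eq_zero_of_not_injective B _ hh]

theorem integral_sq_det_mul_submatrix [DecidableEq ν] (hμ : MemLp id 2 μ)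
    (hμ_mean : ∫ x, x ∂μ = 0) (hμ_var : ∫ x, x ^ 2 ∂μ = 1) (B : Matrix ι κ ℝ) (h : ι → ν) :
    ∫ Z : κ → ν → ℝ, (B * (of Z).submatrix id h).det ^ 2
        ∂(Measure.pi fun _ => Measure.pi fun _ => μ) =
      if Function.Injective h then (Fintype.card ι).factorial * (B * Bᵀ).det else 0 := by
  split_ifs with hh
  · have hG := (integrable_sq_det_mul_transpose hμ B).aestronglyMeasurable
    rw [← Measure.map_pi_pi_comp_of_injective μ hh] at hG
    rw [← integral_sq_det_mul_transpose hμ hμ_mean hμ_var B,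
      ← Measure.map_pi_pi_comp_of_injective μ hh,
      integral_map (Measurable.aemeasurable (by fun_prop)) hG]
    rfl
  · simp [det_mul_submatrix_eq_zero_of_not_injective B _ hh]

theorem integral_trElem_mul_transpose [DecidableEq ν] (hμ : MemLp id 2 μ)
    (hμ_mean : ∫ x, x ∂μ = 0) (hμ_var : ∫ x, x ^ 2 ∂μ = 1) (A : Matrix ι κ ℝ) (i : ℕ) :
    ∫ Z : κ → ν → ℝ, trElem ((A * of Z) * (A * of Z)ᵀ) i
        ∂(Measure.pi fun _ => Measure.pi fun _ => μ) =
      (Fintype.card ν).descFactorial i * trElem (A * Aᵀ) i := by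
  have hminor : ∀ g : Fin i → ι, A.submatrix g id * (A.submatrix g id)ᵀ = (A * Aᵀ).submatrix g g :=
    fun g => by rw [transpose_submatrix, ← submatrix_mul _ _ g id g Function.bijective_id]
  refine mul_left_cancel₀ (by positivity : ((i.factorial * i.factorial : ℕ) : ℝ) ≠ 0) ?_
  rw [← integral_const_mul]
  simp only [factorial_sq_mul_trElem_mul_transpose, submatrix_mul _ _ _ id _ Function.bijective_id]
  rw [integral_finsetSum _ fun g _ => integrable_finsetSum _ fun h _ =>
    integrable_sq_det_mul_submatrix hμ _ h]
  simp only [integral_finsetSum _ fun h _ => integrable_sq_det_mul_submatrix hμ _ h,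
    integral_sq_det_mul_submatrix hμ hμ_mean hμ_var, Fintype.sum_ite_injective, Fintype.card_fin,
    hminor, nsmul_eq_mul, ← mul_sum,
    ← (isHermitian_mul_transpose_self A).factorial_mul_trElem_eq_sum_det_submatrix]
  push_cast
  ring

end IidEntries

section PsdSqrt

variable {ι : Type*} [Fintype ι] [DecidableEq ι] {S : Matrix ι ι ℝ}

theorem psdSqrt_transpose (hS : S.PosSemidef) : (psdSqrt hS)ᵀ = psdSqrt hS := by
  simp [psdSqrt, transpose_mul, Matrix.mul_assoc, star_eq_conjTranspose,
    conjTranspose_eq_transpose_of_trivial]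

theorem psdSqrt_mul_self (hS : S.PosSemidef) : psdSqrt hS * psdSqrt hS = S := by
  have hU := mem_unitaryGroup_iff'.mp hS.1.eigenvectorUnitary.2
  have hsp := hS.1.spectral_theorem
  rw [Unitary.conjStarAlgAut_apply] at hsp
  conv_rhs => rw [hsp]
  simp only [psdSqrt, Matrix.mul_assoc]
  rw [← Matrix.mul_assoc (star _) (hS.1.eigenvectorUnitary : Matrix ι ι ℝ), hU,
    Matrix.one_mul, ← Matrix.mul_assoc (diagonal _), diagonal_mul_diagonal]
  congr 3
  funext j
  exact Real.mul_self_sqrt (hS.eigenvalues_nonneg j)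

end PsdSqrt

theorem stmt_11_general (p n : ℕ) (S : Matrix (Fin p) (Fin p) ℝ) (hS : S.PosSemidef) (i : ℕ) :
    (∫ Z : Fin p → Fin n → ℝ,
        trElem ((psdSqrt hS * Matrix.of Z) * (psdSqrt hS * Matrix.of Z)ᵀ) i
        ∂gaussMatrix p n) =
      (n.descFactorial i : ℝ) * trElem S i := by
  have hγ_mean : ∫ x, x ∂gaussianReal 0 1 = 0 := integral_id_gaussianReal
  have hγ_var : ∫ x, x ^ 2 ∂gaussianReal 0 1 = 1 := by
    rw [← variance_of_integral_eq_zero aemeasurable_id' hγ_mean, variance_fun_id_gaussianReal]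
    rfl
  have hS_eq : psdSqrt hS * (psdSqrt hS)ᵀ = S := by rw [psdSqrt_transpose, psdSqrt_mul_self]
  simpa [hS_eq, gaussMatrix] using
    integral_trElem_mul_transpose (ν := Fin n) (memLp_id_gaussianReal 2) hγ_mean hγ_var
      (psdSqrt hS) i

/-- For the central Wishart matrix `W = (Σ^{1/2}Z)(Σ^{1/2}Z)ᵀ` with
`Z` a `p × n` matrix of i.i.d. standard normals and `Σ` symmetric positive semidefinite,
for `1 ≤ i ≤ p ≤ n`: `E[Tr_i(W)] = (n)_i · Tr_i(Σ)`, where `(n)_i` is the falling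
factorial. -/
theorem stmt_11 (p n : ℕ) (S : Matrix (Fin p) (Fin p) ℝ) (hS : S.PosSemidef)
    (i : ℕ) (hi1 : 1 ≤ i) (hip : i ≤ p) (hpn : p ≤ n) :
    (∫ Z : Fin p → Fin n → ℝ,
        trElem ((psdSqrt hS * Matrix.of Z) * (psdSqrt hS * Matrix.of Z)ᵀ) i
        ∂gaussMatrix p n) =
      (n.descFactorial i : ℝ) * trElem S i :=
  stmt_11_general p n S hS i
end

section
/- Let Z be a p×n random matrix with i.i.d. standard normal entries and set W = ZZᵀ (the central Wishart matrix W_p(n,I_p,0)). Then for every integer i with 1 ≤ i ≤ p ≤ n, i! · E[ Tr_i(W) ] = (n)_i · (p)_i. -/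
open Matrix MeasureTheory ProbabilityTheory

/-!
By the principal-minor expansion of the characteristic polynomial, `Tr_i(W)` is the sum of the
`i × i` principal minors of `W = ZZᵀ`, and the minor on the rows `J` is `det (Z_J Z_Jᵀ)`.
Expanding it over permutations `σ` of `J` and column choices `k : J → [n]` gives monomials
`∏ₐ Z_{σ a, k a} Z_{a, k a}`; after reindexing the first factor by `σ`, every row of `Z`
contributes exactly one pair of entries, so independence of the rows gives the expectation
`∏ₐ [k (σ a) = k a]`. Summing over `σ` with signs yields `det [k a = k b]`, which is `1` if `k`
is injective and `0` otherwise, so `E det (Z_J Z_Jᵀ) = (n)_i`. There are `C(p, i)` choices of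
`J`, and `i! C(p, i) = (p)_i`.
-/

open Polynomial Finset

section PrincipalMinors

variable {ι : Type*} [Fintype ι] [DecidableEq ι]

theorem Matrix.IsHermitian.trElem_eq_sum_det_submatrix_s12 {S : Matrix ι ι ℝ}
    (hS : S.IsHermitian) (i : ℕ) :
    trElem S i =
      ∑ s ∈ univ.powersetCard i, (S.submatrix (Subtype.val : s → ι) Subtype.val).det := by
  rw [trElem, dif_pos hS]
  rcases le_or_gt i (Fintype.card ι) with hi | hi
  · have hcoeff := S.charpoly_coeff_eq_sum_minors i hi
    simp only [hS.charpoly_eq, RCLike.ofReal_real_eq_id, id_eq, sub_eq_add_neg, ← map_neg C]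
      at hcoeff
    rw [prod_X_add_C_coeff _ _ (by simp), card_univ, Nat.sub_sub_self hi] at hcoeff
    simp_rw [prod_neg] at hcoeff
    rw [sum_congr rfl fun t ht => by rw [(mem_powersetCard.1 ht).2], ← mul_sum] at hcoeff
    exact mul_left_cancel₀ (pow_ne_zero _ (neg_ne_zero.2 one_ne_zero)) hcoeff
  · simp [powersetCard_eq_empty.2 (card_univ (α := ι) ▸ hi)]

end PrincipalMinors

theorem prod_entry_perm_mul_entry {ι κ M : Type*} [Fintype ι] [CommMonoid M]
    (Z : ι → κ → M) (σ : Equiv.Perm ι) (k : ι → κ) :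
    ∏ a, Z (σ a) (k a) * Z a (k a) = ∏ b, Z b (k (σ.symm b)) * Z b (k b) := by
  rw [prod_mul_distrib, prod_mul_distrib, ← Equiv.prod_comp σ fun b => Z b (k (σ.symm b))]
  simp

section DetExpansion

variable {ι κ R : Type*} [Fintype ι] [DecidableEq ι] [CommRing R]

theorem Matrix.det_mul_eq_sum_perm_sum [Fintype κ] (A : Matrix ι κ R) (B : Matrix κ ι R) :
    (A * B).det = ∑ σ : Equiv.Perm ι, ∑ k : ι → κ,
      (Equiv.Perm.sign σ : ℤ) * ∏ a, A (σ a) (k a) * B (k a) a := by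
  simp_rw [det_apply', mul_apply, prod_univ_sum, Fintype.piFinset_univ, mul_sum]

theorem Matrix.det_of_eq_indicator [DecidableEq κ] (k : ι → κ) :
    (of fun a b => if k a = k b then (1 : R) else 0).det =
      if Function.Injective k then 1 else 0 := by
  split_ifs with hk
  · rw [show (of fun a b => if k a = k b then (1 : R) else 0) = 1 by
      ext a b
      simp [one_apply, hk.eq_iff], det_one]
  · obtain ⟨a, b, hab, hne⟩ := Function.not_injective_iff.1 hk
    exact det_zero_of_row_eq hne (funext fun c => by simp [hab])

theorem Matrix.det_of_mul_transpose_eq_sum_perm_sum [Fintype κ] (Z : ι → κ → R) :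
    (of Z * (of Z)ᵀ).det = ∑ σ : Equiv.Perm ι, ∑ k : ι → κ,
      (Equiv.Perm.sign σ : ℤ) * ∏ a, Z (σ a) (k a) * Z a (k a) :=
  det_mul_eq_sum_perm_sum _ _

end DetExpansion

section IidMatrix

variable {ι κ : Type*} [Fintype ι] [Fintype κ] {μ : Measure ℝ} [IsProbabilityMeasure μ]

theorem integral_eval_mul_eval_pi [DecidableEq κ] (hmean : ∫ x, x ∂μ = 0)
    (hsq : ∫ x, x ^ 2 ∂μ = 1) (m m' : κ) :
    ∫ z, z m * z m' ∂(Measure.pi fun _ : κ => μ) = if m = m' then 1 else 0 := by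
  split_ifs with h
  · subst h
    simpa only [sq] using
      (integral_comp_eval (μ := fun _ : κ => μ) (i := m) (f := fun x => x ^ 2)
        (by fun_prop)).trans hsq
  · have hind : IndepFun (fun z : κ → ℝ => z m) (fun z => z m') (Measure.pi fun _ => μ) :=
      (iIndepFun_pi (X := fun _ x => x) fun _ => aemeasurable_id).indepFun h
    rw [hind.integral_fun_mul_eq_mul_integral (measurable_pi_apply m).aestronglyMeasurable
      (measurable_pi_apply m').aestronglyMeasurable, integral_eval, hmean, zero_mul]

theorem integrable_eval_mul_eval_pi (hμ : MemLp id 2 μ) (m m' : κ) :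
    Integrable (fun z : κ → ℝ => z m * z m') (Measure.pi fun _ => μ) := by
  have hrow (l : κ) : MemLp (fun z : κ → ℝ => z l) 2 (Measure.pi fun _ => μ) :=
    hμ.comp_measurePreserving (measurePreserving_eval _ l)
  exact (hrow m).integrable_mul (hrow m')

theorem integrable_prod_entry_perm_mul_entry (hμ : MemLp id 2 μ) (σ : Equiv.Perm ι)
    (k : ι → κ) :
    Integrable (fun Z : ι → κ → ℝ => ∏ a, Z (σ a) (k a) * Z a (k a))
      (Measure.pi fun _ => Measure.pi fun _ => μ) := by
  simp_rw [prod_entry_perm_mul_entry]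
  exact Integrable.fintype_prod (f := fun b (z : κ → ℝ) => z (k (σ.symm b)) * z (k b))
    fun b => integrable_eval_mul_eval_pi hμ _ _

theorem integral_prod_entry_perm_mul_entry [DecidableEq κ] (hmean : ∫ x, x ∂μ = 0)
    (hsq : ∫ x, x ^ 2 ∂μ = 1) (σ : Equiv.Perm ι) (k : ι → κ) :
    ∫ Z : ι → κ → ℝ, ∏ a, Z (σ a) (k a) * Z a (k a)
        ∂(Measure.pi fun _ => Measure.pi fun _ => μ) =
      ∏ a, if k (σ a) = k a then 1 else 0 := by
  simp_rw [prod_entry_perm_mul_entry]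
  rw [integral_fintype_prod_eq_prod (fun b (z : κ → ℝ) => z (k (σ.symm b)) * z (k b))]
  simp_rw [integral_eval_mul_eval_pi hmean hsq]
  rw [← Equiv.prod_comp σ]
  simp [eq_comm]

theorem integrable_det_mul_transpose [DecidableEq ι] (hμ : MemLp id 2 μ) :
    Integrable (fun Z : ι → κ → ℝ => (of Z * (of Z)ᵀ).det)
      (Measure.pi fun _ => Measure.pi fun _ => μ) := by
  simp_rw [det_of_mul_transpose_eq_sum_perm_sum]
  exact integrable_finsetSum _ fun σ _ => integrable_finsetSum _ fun k _ =>
    (integrable_prod_entry_perm_mul_entry hμ σ k).const_mul _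

theorem integral_det_mul_transpose [DecidableEq ι] [DecidableEq κ] (hμ : MemLp id 2 μ)
    (hmean : ∫ x, x ∂μ = 0) (hsq : ∫ x, x ^ 2 ∂μ = 1) :
    ∫ Z : ι → κ → ℝ, (of Z * (of Z)ᵀ).det ∂(Measure.pi fun _ => Measure.pi fun _ => μ) =
      Fintype.card (ι ↪ κ) := by
  simp_rw [det_of_mul_transpose_eq_sum_perm_sum]
  rw [integral_finsetSum _ fun σ _ => integrable_finsetSum _ fun k _ =>
    (integrable_prod_entry_perm_mul_entry hμ σ k).const_mul _]
  simp_rw [integral_finsetSum _ fun k _ =>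
    (integrable_prod_entry_perm_mul_entry hμ _ k).const_mul _, integral_const_mul,
    integral_prod_entry_perm_mul_entry hmean hsq]
  rw [sum_comm]
  have hdet (k : ι → κ) := det_of_eq_indicator (R := ℝ) k
  simp_rw [det_apply', of_apply] at hdet
  simp_rw [hdet, sum_boole, ← Fintype.card_subtype]
  exact_mod_cast Fintype.card_congr (Equiv.subtypeInjectiveEquivEmbedding ι κ)

end IidMatrix

theorem measurePreserving_restrict_pi {ι α : Type*} [Fintype ι] [MeasurableSpace α]
    (ν : Measure α) [IsProbabilityMeasure ν] (s : Finset ι) :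
    MeasurePreserving (fun x : ι → α => fun i : s => x i) (Measure.pi fun _ => ν)
      (Measure.pi fun _ : s => ν) := by
  classical
  convert measurePreserving_fst.comp
    (measurePreserving_piEquivPiSubtypeProd (fun _ => ν) (· ∈ s))
  rfl

section PrincipalMinorsOfIidGram

variable {ι κ : Type*} [Fintype ι] [DecidableEq ι] [Fintype κ] {μ : Measure ℝ}
  [IsProbabilityMeasure μ]

theorem integrable_det_submatrix_mul_transpose (hμ : MemLp id 2 μ) (s : Finset ι) :
    Integrable (fun Z : ι → κ → ℝ => ((of Z * (of Z)ᵀ).submatrix (Subtype.val : s → ι)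
      Subtype.val).det) (Measure.pi fun _ => Measure.pi fun _ => μ) :=
  (measurePreserving_restrict_pi _ s).integrable_comp_of_integrable
    (integrable_det_mul_transpose hμ)

theorem integral_det_submatrix_mul_transpose [DecidableEq κ] (hμ : MemLp id 2 μ)
    (hmean : ∫ x, x ∂μ = 0) (hsq : ∫ x, x ^ 2 ∂μ = 1) (s : Finset ι) :
    ∫ Z : ι → κ → ℝ, ((of Z * (of Z)ᵀ).submatrix (Subtype.val : s → ι) Subtype.val).det
        ∂(Measure.pi fun _ => Measure.pi fun _ => μ) =
      (Fintype.card κ).descFactorial s.card := by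
  have hrestrict := measurePreserving_restrict_pi (Measure.pi fun _ : κ => μ) s
  have hcont : Continuous fun Y : s → κ → ℝ => (of Y * (of Y)ᵀ).det := by fun_prop
  calc
    _ = ∫ Y : s → κ → ℝ, (of Y * (of Y)ᵀ).det
          ∂(Measure.pi fun _ => Measure.pi fun _ => μ) := by
      rw [← hrestrict.map_eq,
        integral_map hrestrict.measurable.aemeasurable hcont.aestronglyMeasurable]
      rfl
    _ = (Fintype.card κ).descFactorial s.card := by
      rw [integral_det_mul_transpose hμ hmean hsq, Fintype.card_embedding_eq, Fintype.card_coe]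

end PrincipalMinorsOfIidGram

theorem stmt_12_general (p n : ℕ) (i : ℕ) :
    (i.factorial : ℝ) *
        ∫ Z : Fin p → Fin n → ℝ,
          trElem (Matrix.of Z * (Matrix.of Z)ᵀ) i ∂gaussMatrix p n =
      (n.descFactorial i : ℝ) * (p.descFactorial i : ℝ) := by
  have hμ : MemLp id 2 (gaussianReal 0 1) := memLp_id_gaussianReal 2
  have hmean : ∫ x, x ∂gaussianReal 0 1 = 0 := integral_id_gaussianReal
  have hsq : ∫ x, x ^ 2 ∂gaussianReal 0 1 = 1 := by
    simpa [variance_id_gaussianReal] using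
      (variance_of_integral_eq_zero aemeasurable_id hmean).symm
  have hherm (Z : Fin p → Fin n → ℝ) : (of Z * (of Z)ᵀ).IsHermitian := by
    simpa using isHermitian_mul_conjTranspose_self (of Z)
  simp_rw [(hherm _).trElem_eq_sum_det_submatrix_s12]
  rw [gaussMatrix, integral_finsetSum _ fun s _ => integrable_det_submatrix_mul_transpose hμ s,
    sum_congr rfl fun s hs => by
      rw [integral_det_submatrix_mul_transpose hμ hmean hsq, (mem_powersetCard.1 hs).2],
    sum_const, card_powersetCard, card_univ, Fintype.card_fin, Fintype.card_fin, nsmul_eq_mul,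
    Nat.descFactorial_eq_factorial_mul_choose p i]
  push_cast
  ring

/-- For the central Wishart matrix `W = ZZᵀ` with `Z` a `p × n`
matrix of i.i.d. standard normals, for `1 ≤ i ≤ p ≤ n`:
`i! · E[Tr_i(W)] = (n)_i · (p)_i`. -/
theorem stmt_12 (p n : ℕ) (i : ℕ) (hi1 : 1 ≤ i) (hip : i ≤ p) (hpn : p ≤ n) :
    (i.factorial : ℝ) *
        ∫ Z : Fin p → Fin n → ℝ,
          trElem (Matrix.of Z * (Matrix.of Z)ᵀ) i ∂gaussMatrix p n =
      (n.descFactorial i : ℝ) * (p.descFactorial i : ℝ) :=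
  stmt_12_general p n i
end
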